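/- arXiv:1102.4478 — 6 statements merged into one kernel-verified Lean document; each statement's English description precedes it below -/
import Mathlib

section
/- Let γ : ℝ → ℝ² be a C^∞ curve with a 3/2-cusp at t = 0. Then the function τ(t) := sgn(t)·√(|s_g(t)|) extends to a C^∞ function on a neighborhood of 0 with τ(0) = 0 and τ'(0) > 0; in particular τ can be taken as a local coordinate of γ at t = 0 (the half-arclength parameter). -/
/-!
Since `γ'(0) = 0`, Hadamard's lemma writes `γ'(u) = u • g(u)` with `g` smooth and
`g(0) = γ''(0) ≠ 0`. Near `0` the speed is therefore `|u| r(u)` with `r = √(g₁² + g₂²)`, and `r`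
may be replaced by a smooth positive function on all of `ℝ`. The substitution `u = s t` gives
`s_g(t) = t |t| q(t)` with `q(t) = ∫₀¹ s r(s t) ds` smooth and positive, whence
`τ(t) = t √(q t)`.
-/

noncomputable section
open Real Set Filter Topology

/-- The determinant `[a, b] = a₁b₂ − a₂b₁` of two vectors in the plane. -/
def det2 (a b : ℝ × ℝ) : ℝ := a.1 * b.2 - a.2 * b.1

/-- The Euclidean norm on `ℝ × ℝ`. -/
def enorm2 (a : ℝ × ℝ) : ℝ := Real.sqrt (a.1 ^ 2 + a.2 ^ 2)

/-- The Euclidean arclength parameter of `γ` based at `0`. -/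
def sG (γ : ℝ → ℝ × ℝ) (t : ℝ) : ℝ := ∫ u in (0:ℝ)..t, enorm2 (deriv γ u)

/-- The affine arclength parameter of `γ` based at `0`. -/
def sA (γ : ℝ → ℝ × ℝ) (t : ℝ) : ℝ :=
  ∫ u in (0:ℝ)..t, |det2 (deriv γ u) (iteratedDeriv 2 γ u)| ^ ((1:ℝ)/3)

/-- The Euclidean curvature `κ_g = [γ', γ'']/‖γ'‖³`. -/
def kappaG (γ : ℝ → ℝ × ℝ) (t : ℝ) : ℝ :=
  det2 (deriv γ t) (iteratedDeriv 2 γ t) / enorm2 (deriv γ t) ^ 3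

/-- The affine curvature `κ_A`. -/
def kappaA (γ : ℝ → ℝ × ℝ) (t : ℝ) : ℝ :=
  (3 * det2 (deriv γ t) (iteratedDeriv 2 γ t) * det2 (deriv γ t) (iteratedDeriv 4 γ t)
    + 12 * det2 (deriv γ t) (iteratedDeriv 2 γ t)
        * det2 (iteratedDeriv 2 γ t) (iteratedDeriv 3 γ t)
    - 5 * det2 (deriv γ t) (iteratedDeriv 3 γ t) ^ 2)
  / (9 * |det2 (deriv γ t) (iteratedDeriv 2 γ t)| ^ ((8:ℝ)/3))

/-- `γ` has a 3/2-cusp at `t = 0`. -/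
def HasCusp (γ : ℝ → ℝ × ℝ) : Prop :=
  deriv γ 0 = 0 ∧ det2 (iteratedDeriv 2 γ 0) (iteratedDeriv 3 γ 0) ≠ 0

/-- The Euclidean cuspidal curvature at a 3/2-cusp `t = 0`. -/
def muG (γ : ℝ → ℝ × ℝ) : ℝ :=
  det2 (iteratedDeriv 2 γ 0) (iteratedDeriv 3 γ 0) / enorm2 (iteratedDeriv 2 γ 0) ^ ((5:ℝ)/2)

/-- The affine cuspidal curvature at a 3/2-cusp `t = 0`. -/
def muA (γ : ℝ → ℝ × ℝ) : ℝ :=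
  (24 * det2 (iteratedDeriv 2 γ 0) (iteratedDeriv 3 γ 0)
      * det2 (iteratedDeriv 2 γ 0) (iteratedDeriv 5 γ 0)
   + 60 * det2 (iteratedDeriv 2 γ 0) (iteratedDeriv 3 γ 0)
      * det2 (iteratedDeriv 3 γ 0) (iteratedDeriv 4 γ 0)
   - 35 * det2 (iteratedDeriv 2 γ 0) (iteratedDeriv 4 γ 0) ^ 2)
  / |det2 (iteratedDeriv 2 γ 0) (iteratedDeriv 3 γ 0)| ^ ((12:ℝ)/5)

/-- `γ` (regular at `0`) has a generic inflection point at `t = 0`. -/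
def HasGenericInflection (γ : ℝ → ℝ × ℝ) : Prop :=
  deriv γ 0 ≠ 0 ∧ det2 (deriv γ 0) (iteratedDeriv 2 γ 0) = 0 ∧
    det2 (deriv γ 0) (iteratedDeriv 3 γ 0) ≠ 0

/-- The affine inflectional curvature at a generic inflection point `t = 0`. -/
def muI (γ : ℝ → ℝ × ℝ) : ℝ :=
  Real.sign (det2 (deriv γ 0) (iteratedDeriv 3 γ 0)) *
    (det2 (deriv γ 0) (iteratedDeriv 4 γ 0)
      - 6 * det2 (iteratedDeriv 2 γ 0) (iteratedDeriv 3 γ 0))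
  / |det2 (deriv γ 0) (iteratedDeriv 3 γ 0)| ^ ((5:ℝ)/4)

/-- The affine map `x ↦ Ax + v` on the plane, with `A = (a b; c d)`. -/
def applyAff (a b c d : ℝ) (v : ℝ × ℝ) (p : ℝ × ℝ) : ℝ × ℝ :=
  (a * p.1 + b * p.2 + v.1, c * p.1 + d * p.2 + v.2)

open MeasureTheory intervalIntegral
open scoped ContDiff

section ParametricIntegral

variable {E : Type*} [NormedAddCommGroup E] [NormedSpace ℝ E]

theorem hasDerivAt_intervalIntegral_of_contDiff_uncurry {F : ℝ → ℝ → E}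
    (hF : ContDiff ℝ 1 ↿F) (a b x₀ : ℝ) :
    HasDerivAt (fun x => ∫ s in a..b, F x s)
      (∫ s in a..b, fderiv ℝ ↿F (x₀, s) (1, 0)) x₀ := by
  have hF' : Continuous fun p : ℝ × ℝ => fderiv ℝ ↿F p (1, 0) :=
    (hF.continuous_fderiv one_ne_zero).clm_apply continuous_const
  obtain ⟨C, hC⟩ := ((isCompact_closedBall x₀ 1).prod isCompact_uIcc).exists_bound_of_continuousOn
    hF'.continuousOn
  refine (hasDerivAt_integral_of_dominated_loc_of_deriv_le (bound := fun _ => C)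
    (Metric.ball_mem_nhds x₀ one_pos)
    (Eventually.of_forall fun x =>
      (hF.continuous.comp (Continuous.prodMk_right x)).aestronglyMeasurable)
    ((hF.continuous.comp (Continuous.prodMk_right x₀)).intervalIntegrable _ _)
    (hF'.comp (Continuous.prodMk_right x₀)).aestronglyMeasurable
    (ae_of_all _ fun s hs x hx =>
      hC (x, s) ⟨Metric.ball_subset_closedBall hx, uIoc_subset_uIcc hs⟩)
    intervalIntegrable_const
    (ae_of_all _ fun s _ x _ => ?_)).2
  exact (hF.differentiable one_ne_zero (x, s)).hasFDerivAt.comp_hasDerivAt x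
    ((hasDerivAt_id x).prodMk (hasDerivAt_const x s))

theorem contDiff_intervalIntegral_of_contDiff_uncurry {n : ℕ} {F : ℝ → ℝ → E}
    (hF : ContDiff ℝ n ↿F) (a b : ℝ) : ContDiff ℝ n fun x => ∫ s in a..b, F x s := by
  induction n generalizing F with
  | zero =>
    exact contDiff_zero.mpr
      (continuous_parametric_intervalIntegral_of_continuous' (contDiff_zero.mp hF) a b)
  | succ n ih =>
    have hF1 : ContDiff ℝ 1 ↿F := hF.of_le (by exact_mod_cast n.succ_pos)
    have hderiv := hasDerivAt_intervalIntegral_of_contDiff_uncurry hF1 a b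
    rw [Nat.cast_succ, contDiff_succ_iff_deriv]
    refine ⟨fun x => (hderiv x).differentiableAt, by simp, ?_⟩
    rw [funext fun x => (hderiv x).deriv]
    exact ih ((hF.fderiv_right (by push_cast; rfl)).clm_apply contDiff_const)

theorem contDiff_infty_intervalIntegral_of_contDiff_uncurry {F : ℝ → ℝ → E}
    (hF : ContDiff ℝ ∞ ↿F) (a b : ℝ) : ContDiff ℝ ∞ fun x => ∫ s in a..b, F x s :=
  contDiff_infty.mpr fun n =>
    contDiff_intervalIntegral_of_contDiff_uncurry (hF.of_le (by exact_mod_cast le_top)) a b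

theorem ContDiff.exists_eq_add_smul [CompleteSpace E] {f : ℝ → E} (hf : ContDiff ℝ ∞ f) :
    ∃ g : ℝ → E, ContDiff ℝ ∞ g ∧ (∀ t, f t = f 0 + t • g t) ∧ g 0 = deriv f 0 := by
  have hf' : ContDiff ℝ ∞ (deriv f) := (contDiff_infty_iff_deriv.mp hf).2
  refine ⟨fun t => ∫ s in (0:ℝ)..1, deriv f (s * t),
    contDiff_infty_intervalIntegral_of_contDiff_uncurry
      (hf'.comp (contDiff_snd.mul contDiff_fst)) 0 1, fun t => ?_, by simp⟩
  rw [smul_integral_comp_mul_right, zero_mul, one_mul,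
    integral_deriv_eq_sub (fun u _ => hf.differentiable (by simp) u)
      (hf'.continuous.intervalIntegrable 0 t), add_sub_cancel]

end ParametricIntegral

theorem ContDiff.exists_pos_eventuallyEq {E : Type*} [NormedAddCommGroup E] [NormedSpace ℝ E]
    [HasContDiffBump E] {n : ℕ∞} {f : E → ℝ} (hf : ContDiff ℝ n f) {x₀ : E}
    (h : 0 < f x₀) : ∃ g : E → ℝ, ContDiff ℝ n g ∧ (∀ x, 0 < g x) ∧ g =ᶠ[𝓝 x₀] f := by
  set c := f x₀ / 2
  obtain ⟨δ, hδ, hball⟩ := Metric.eventually_nhds_iff_ball.mp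
    (hf.continuous.continuousAt.eventually (lt_mem_nhds (half_lt_self h)))
  let χ : ContDiffBump x₀ := ⟨δ / 2, δ, half_pos hδ, half_lt_self hδ⟩
  refine ⟨fun x => c + (f x - c) * χ x, contDiff_const.add ((hf.sub contDiff_const).mul χ.contDiff),
    fun x => ?_, ?_⟩
  · by_cases hx : χ x = 0
    · simp [hx, c, h]
    · have hfx : c < f x := hball x (χ.support_eq ▸ hx)
      have := mul_nonneg (sub_pos.2 hfx).le (χ.nonneg (x := x))
      have hc : 0 < c := half_pos h
      change 0 < c + _
      linarith
  · filter_upwards [Metric.closedBall_mem_nhds x₀ (half_pos hδ)] with x hx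
    simp [χ.one_of_mem_closedBall hx]

theorem Real.sign_mul_abs (t : ℝ) : Real.sign t * |t| = t := by
  rcases lt_trichotomy t 0 with h | rfl | h
  · rw [Real.sign_of_neg h, abs_of_neg h]; ring
  · simp
  · rw [Real.sign_of_pos h, abs_of_pos h, one_mul]

theorem integral_abs_mul_eq_mul_abs_mul_integral {r : ℝ → ℝ} (t : ℝ) :
    ∫ u in (0:ℝ)..t, |u| * r u = t * |t| * ∫ s in (0:ℝ)..1, s * r (s * t) := by
  calc ∫ u in (0:ℝ)..t, |u| * r u
      = t • ∫ s in (0:ℝ)..1, |s * t| * r (s * t) := by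
        rw [smul_integral_comp_mul_right (f := fun u => |u| * r u), zero_mul, one_mul]
    _ = t * ∫ s in (0:ℝ)..1, |t| * (s * r (s * t)) := by
        rw [smul_eq_mul]
        congr 1
        refine integral_congr fun s hs => ?_
        rw [uIcc_of_le zero_le_one] at hs
        rw [abs_mul, abs_of_nonneg hs.1]
        ring
    _ = t * |t| * ∫ s in (0:ℝ)..1, s * r (s * t) := by
        rw [intervalIntegral.integral_const_mul, mul_assoc]

theorem exists_contDiff_sign_mul_sqrt_abs_integral {r : ℝ → ℝ} (hr : ContDiff ℝ ∞ r)
    (hpos : ∀ u, 0 < r u) :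
    ∃ τ : ℝ → ℝ, ContDiff ℝ ∞ τ ∧
      (∀ t, τ t = Real.sign t * √|∫ u in (0:ℝ)..t, |u| * r u|) ∧ 0 < deriv τ 0 := by
  set q := fun t => ∫ s in (0:ℝ)..1, s * r (s * t)
  have hq : ContDiff ℝ ∞ q := contDiff_infty_intervalIntegral_of_contDiff_uncurry
    (contDiff_snd.mul (hr.comp (contDiff_snd.mul contDiff_fst))) 0 1
  have hq_pos (t : ℝ) : 0 < q t :=
    intervalIntegral_pos_of_pos_on
      ((continuous_id.mul (hr.continuous.comp (continuous_id.mul continuous_const))).intervalIntegrable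
        0 1)
      (fun s hs => mul_pos hs.1 (hpos _)) one_pos
  have hsqrt_q : ContDiff ℝ ∞ fun t => √(q t) := hq.sqrt fun t => (hq_pos t).ne'
  refine ⟨fun t => t * √(q t), contDiff_id.mul hsqrt_q, fun t => ?_, ?_⟩
  · rw [integral_abs_mul_eq_mul_abs_mul_integral, abs_mul, abs_mul, abs_abs, abs_of_pos (hq_pos t),
      sqrt_mul (mul_self_nonneg _), sqrt_mul_self (abs_nonneg t), ← mul_assoc, Real.sign_mul_abs]
  · rw [deriv_fun_mul differentiableAt_fun_id (hsqrt_q.differentiable (by simp) 0)]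
    simpa using hq_pos 0

theorem enorm2_smul (t : ℝ) (v : ℝ × ℝ) : enorm2 (t • v) = |t| * enorm2 v := by
  rw [enorm2, enorm2, ← sqrt_sq_eq_abs, ← sqrt_mul (sq_nonneg t)]
  congr 1
  simp only [Prod.smul_fst, Prod.smul_snd, smul_eq_mul]
  ring

/-- At a 3/2-cusp, `τ(t) = sgn(t)·√|s_g(t)|` extends to a `C^∞` function near `0`
with `τ(0) = 0` and `τ'(0) > 0`, so it is a local coordinate (half-arclength parameter). -/
theorem stmt_0 (γ : ℝ → ℝ × ℝ) (hγ : ContDiff ℝ (⊤:ℕ∞) γ) (hcusp : HasCusp γ) :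
    ∃ ε > (0:ℝ), ∃ τ : ℝ → ℝ, ContDiffOn ℝ (⊤:ℕ∞) τ (Set.Ioo (-ε) ε) ∧
      (∀ t ∈ Set.Ioo (-ε) ε, τ t = Real.sign t * Real.sqrt |sG γ t|) ∧
      τ 0 = 0 ∧ 0 < deriv τ 0 := by
  obtain ⟨g, hg, hγ'_eq, hg0⟩ := (contDiff_infty_iff_deriv.mp hγ).2.exists_eq_add_smul
  have hg0_ne : g 0 ≠ 0 := by
    intro h0
    apply hcusp.2
    rw [iteratedDeriv_succ, iteratedDeriv_one, ← hg0, h0]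
    simp [det2]
  have hρ0 : 0 < (g 0).1 ^ 2 + (g 0).2 ^ 2 := by
    rcases not_and_or.mp (Prod.ext_iff.not.mp hg0_ne) with h1 | h2
    · exact add_pos_of_pos_of_nonneg (sq_pos_of_ne_zero h1) (sq_nonneg _)
    · exact add_pos_of_nonneg_of_pos (sq_nonneg _) (sq_pos_of_ne_zero h2)
  obtain ⟨ρ, hρ, hρ_pos, hρ_eq⟩ := ContDiff.exists_pos_eventuallyEq
    (n := ⊤) ((hg.fst.pow 2).add (hg.snd.pow 2)) hρ0
  obtain ⟨ε, hε, hρ_eq⟩ := Metric.eventually_nhds_iff_ball.mp hρ_eq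
  obtain ⟨τ, hτ, hτ_eq, hτ'⟩ := exists_contDiff_sign_mul_sqrt_abs_integral
    (hρ.sqrt fun u => (hρ_pos u).ne') fun u => sqrt_pos.mpr (hρ_pos u)
  refine ⟨ε, hε, τ, hτ.contDiffOn, fun t ht => ?_, by simp [hτ_eq], hτ'⟩
  rw [hτ_eq, sG]
  congr 3
  refine integral_congr fun u hu => ?_
  have hu : u ∈ Metric.ball 0 ε := by
    rw [Real.ball_eq_Ioo, zero_sub, zero_add]
    exact ordConnected_Ioo.uIcc_subset (by simpa using hε) ht hu
  rw [hγ'_eq, hcusp.1, zero_add, enorm2_smul, enorm2, hρ_eq u hu]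
end
end

section
/- Let f : ℝ → ℝ be a C^∞ function with f(0) ≠ 0, set θ(τ) := 2∫₀^τ f(u) du and γ(τ) := 2∫₀^τ u·(cos θ(u), sin θ(u)) du. Then γ is a C^∞ curve with a 3/2-cusp at τ = 0, ‖γ'(τ)‖ = 2|τ| for all τ (so τ is the half-arclength parameter, i.e. |s_g(τ)| = τ²), and √(|s_g(τ)|)·κ_g(τ) = f(τ) for all τ ≠ 0 near 0. -/
noncomputable section
open Real Set Filter Topology

/-
With `e(φ) = (cos φ, sin φ)` we have `γ' = 2τ·e(θ)` and, since `θ' = 2f`,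
`γ'' = 2·e(θ) + 4τf·e(θ + π/2)`. Hence `‖γ'‖ = 2|τ|`, so `s_g(τ) = τ|τ|`, and
`[γ', γ''] = 8τ²f`, so `κ_g = 8τ²f/(2|τ|)³ = f/|τ| = f/√|s_g|`. At `τ = 0`,
`γ'' = 2e(θ(0))` and `γ''' = 8f(0)·e(θ(0) + π/2)`, whose determinant `16 f(0)` is nonzero.
-/

theorem contDiff_integral_of_contDiff {E : Type*} [NormedAddCommGroup E] [NormedSpace ℝ E]
    [CompleteSpace E] {g : ℝ → E} (hg : ContDiff ℝ (⊤:ℕ∞) g) :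
    ContDiff ℝ (⊤:ℕ∞) (fun s => ∫ u in (0:ℝ)..s, g u) := by
  rw [contDiff_infty_iff_deriv, funext (Continuous.deriv_integral g hg.continuous 0)]
  exact ⟨fun s => (hg.continuous.integral_hasStrictDerivAt 0 s).hasDerivAt.differentiableAt, hg⟩

theorem integral_two_mul_abs (s : ℝ) : ∫ u in (0:ℝ)..s, 2 * |u| = s * |s| := by
  rcases le_total 0 s with hs | hs
  · rw [intervalIntegral.integral_congr (g := fun u => 2 * u) fun u hu => by
      rw [Set.uIcc_of_le hs] at hu; simp [abs_of_nonneg hu.1]]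
    rw [intervalIntegral.integral_const_mul, integral_id, abs_of_nonneg hs]; ring
  · rw [intervalIntegral.integral_congr (g := fun u => -2 * u) fun u hu => by
      rw [Set.uIcc_of_ge hs] at hu; simp [abs_of_nonpos hu.2]]
    rw [intervalIntegral.integral_const_mul, integral_id, abs_of_nonpos hs]; ring

theorem sG_eq_mul_abs {γ : ℝ → ℝ × ℝ} (h : ∀ s, enorm2 (deriv γ s) = 2 * |s|) (s : ℝ) :
    sG γ s = s * |s| := by
  simp only [sG, h, integral_two_mul_abs]

theorem enorm2_two_mul_cos_sin (s φ : ℝ) : enorm2 (2 * s * cos φ, 2 * s * sin φ) = 2 * |s| := by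
  rw [enorm2, ← sqrt_sq (by positivity : 0 ≤ 2 * |s|)]
  congr 1
  linear_combination (4 * s ^ 2) * sin_sq_add_cos_sq φ - 4 * sq_abs s

theorem det2_two_mul_cos_sin (s φ k : ℝ) :
    det2 (2 * s * cos φ, 2 * s * sin φ)
      (2 * cos φ - 4 * s * k * sin φ, 2 * sin φ + 4 * s * k * cos φ) = 8 * s ^ 2 * k := by
  simp only [det2]
  linear_combination (8 * s ^ 2 * k) * sin_sq_add_cos_sq φ

namespace CuspCurve

variable {f θ : ℝ → ℝ} {γ : ℝ → ℝ × ℝ}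
  (hγ : ∀ s, γ s = (2 * ∫ u in (0:ℝ)..s, u * cos (θ u), 2 * ∫ u in (0:ℝ)..s, u * sin (θ u)))
  (hθ : ∀ s, HasDerivAt θ (2 * f s) s)
include hγ hθ

theorem deriv_eq_two_mul_cos_sin : deriv γ = fun s => (2 * s * cos (θ s), 2 * s * sin (θ s)) := by
  have hθc : Continuous θ := continuous_iff_continuousAt.2 fun s => (hθ s).continuousAt
  funext s
  rw [funext hγ]
  refine ((((continuous_id.mul (continuous_cos.comp hθc)).integral_hasStrictDerivAt 0 s
    ).hasDerivAt.const_mul 2).prodMk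
    (((continuous_id.mul (continuous_sin.comp hθc)).integral_hasStrictDerivAt 0 s
    ).hasDerivAt.const_mul 2)).deriv.trans ?_
  simp only [Pi.mul_apply, Function.comp_apply, id, mul_assoc]

theorem iteratedDeriv_two_eq :
    iteratedDeriv 2 γ = fun s => (2 * cos (θ s) - 4 * s * f s * sin (θ s),
      2 * sin (θ s) + 4 * s * f s * cos (θ s)) := by
  rw [iteratedDeriv_succ, iteratedDeriv_one, deriv_eq_two_mul_cos_sin hγ hθ]
  funext s
  refine ((((hasDerivAt_id s).const_mul 2).mul (hθ s).cos).prodMk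
    (((hasDerivAt_id s).const_mul 2).mul (hθ s).sin)).deriv.trans ?_
  simp only [id, Prod.mk.injEq]
  constructor <;> ring

theorem iteratedDeriv_three_zero (hf : DifferentiableAt ℝ f 0) :
    iteratedDeriv 3 γ 0 = (-8 * f 0 * sin (θ 0), 8 * f 0 * cos (θ 0)) := by
  rw [iteratedDeriv_succ, iteratedDeriv_two_eq hγ hθ]
  have h4sf := ((hasDerivAt_id (0:ℝ)).const_mul 4).mul hf.hasDerivAt
  refine ((((hθ 0).cos.const_mul 2).sub (h4sf.mul (hθ 0).sin)).prodMk
    (((hθ 0).sin.const_mul 2).add (h4sf.mul (hθ 0).cos))).deriv.trans ?_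
  simp only [id, Pi.mul_apply, Prod.mk.injEq]
  constructor <;> ring

theorem enorm2_deriv_eq (s : ℝ) : enorm2 (deriv γ s) = 2 * |s| := by
  rw [deriv_eq_two_mul_cos_sin hγ hθ]
  exact enorm2_two_mul_cos_sin s (θ s)

theorem abs_sG_eq_sq (s : ℝ) : |sG γ s| = s ^ 2 := by
  rw [sG_eq_mul_abs (enorm2_deriv_eq hγ hθ), abs_mul, abs_abs, ← sq, sq_abs]

theorem hasCusp (hf : DifferentiableAt ℝ f 0) (hf0 : f 0 ≠ 0) : HasCusp γ := by
  refine ⟨by simp [deriv_eq_two_mul_cos_sin hγ hθ], ?_⟩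
  have hdet : det2 (iteratedDeriv 2 γ 0) (iteratedDeriv 3 γ 0) = 16 * f 0 := by
    simp only [iteratedDeriv_two_eq hγ hθ, iteratedDeriv_three_zero hγ hθ hf, det2]
    linear_combination (16 * f 0) * sin_sq_add_cos_sq (θ 0)
  rw [hdet]
  exact mul_ne_zero (by norm_num) hf0

theorem sqrt_abs_sG_mul_kappaG {s : ℝ} (hs : s ≠ 0) : √|sG γ s| * kappaG γ s = f s := by
  rw [kappaG, abs_sG_eq_sq hγ hθ, sqrt_sq_eq_abs, enorm2_deriv_eq hγ hθ,
    deriv_eq_two_mul_cos_sin hγ hθ, iteratedDeriv_two_eq hγ hθ, det2_two_mul_cos_sin, ← sq_abs s]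
  have : |s| ≠ 0 := abs_ne_zero.2 hs
  field_simp
  ring

end CuspCurve

/-- Realization: given `f` smooth with `f(0) ≠ 0`, the curve
`γ(τ) = 2∫₀^τ u·(cos θ(u), sin θ(u)) du`, `θ(τ) = 2∫₀^τ f`, has a 3/2-cusp at `0`,
satisfies `‖γ'(τ)‖ = 2|τ|` (τ is the half-arclength parameter, `|s_g(τ)| = τ²`),
and its normalized curvature is `f`. -/
theorem stmt_3 (f : ℝ → ℝ) (hf : ContDiff ℝ (⊤:ℕ∞) f) (hf0 : f 0 ≠ 0)
    (θ : ℝ → ℝ) (hθ : ∀ s, θ s = 2 * ∫ u in (0:ℝ)..s, f u)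
    (γ : ℝ → ℝ × ℝ)
    (hγdef : ∀ s, γ s = (2 * ∫ u in (0:ℝ)..s, u * Real.cos (θ u),
                          2 * ∫ u in (0:ℝ)..s, u * Real.sin (θ u))) :
    ContDiff ℝ (⊤:ℕ∞) γ ∧ HasCusp γ ∧
      (∀ s, enorm2 (deriv γ s) = 2 * |s|) ∧
      (∀ s, |sG γ s| = s ^ 2) ∧
      ∃ ε > (0:ℝ), ∀ s ∈ Set.Ioo (-ε) ε, s ≠ 0 →
        Real.sqrt |sG γ s| * kappaG γ s = f s := by
  have hθ_smooth : ContDiff ℝ (⊤:ℕ∞) θ := by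
    rw [funext hθ]
    exact contDiff_const.mul (contDiff_integral_of_contDiff hf)
  have hθ' (s : ℝ) : HasDerivAt θ (2 * f s) s := by
    rw [funext hθ]
    exact (hf.continuous.integral_hasStrictDerivAt 0 s).hasDerivAt.const_mul 2
  have hγ_smooth : ContDiff ℝ (⊤:ℕ∞) γ := by
    rw [funext hγdef]
    exact (contDiff_const.mul (contDiff_integral_of_contDiff
        (contDiff_id.mul (contDiff_cos.comp hθ_smooth)))).prodMk
      (contDiff_const.mul (contDiff_integral_of_contDiff
        (contDiff_id.mul (contDiff_sin.comp hθ_smooth))))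
  exact ⟨hγ_smooth, CuspCurve.hasCusp hγdef hθ' (hf.differentiable (by simp) 0) hf0,
    CuspCurve.enorm2_deriv_eq hγdef hθ', CuspCurve.abs_sG_eq_sq hγdef hθ',
    1, one_pos, fun _ _ hs => CuspCurve.sqrt_abs_sG_mul_kappaG hγdef hθ' hs⟩
end
end

section
/- Let γ : ℝ → ℝ² be a C^∞ curve with a positive 3/2-cusp at t = 0 (i.e. [γ''(0), γ'''(0)] > 0). Then there exist an orientation preserving equi-affine transformation T of ℝ² (det of the linear part equal to 1) and a C^∞ change of parameter t = t(u) near u = 0 with t(0) = 0 and dt/du > 0 such that T(γ(t(u))) − (u², u³ + μ_A·u⁵/(80·54^{1/5})) has order higher than u⁵ at u = 0, where μ_A is the affine cuspidal curvature of γ at t = 0. -/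
noncomputable section
open Real Set Filter Topology

/-! Taylor's theorem gives `γ t = γ 0 + t²/2 • e + t³/6 • f + t⁴/24 • m + t⁵/120 • n + o(t⁵)`,
where `e, f, m, n` are the derivatives of order `2, …, 5` at `0`. Substituting
`t = α u + β u² + p u³ + q u⁴` turns this into `∑ uʲ • Eⱼ + o(u⁵)` (`j = 2, …, 5`). The
linear map `w ↦ ([w, E₃], [E₂, w])` has determinant `[E₂, E₃] = α⁵ [e, f] / 12`, so for
`α = (12 / [e, f])^{1/5}` it is equi-affine and sends `E₂, E₃` to the standard basis. Then `β`,
`p` and `q` are solved for linearly so that `E₄` and the first coordinate of `E₅` vanish. The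
remaining coordinate `[E₂, E₅]` equals `α⁷ N / (5760 [e, f])`, where `N` is the numerator of
`μ_A`; since `12⁷ · 54 = 72⁵`, this is `μ_A / (80 · 54^{1/5})`. -/

open Asymptotics

def affLin (a b c d : ℝ) : ℝ × ℝ →L[ℝ] ℝ × ℝ :=
  (a • ContinuousLinearMap.fst ℝ ℝ ℝ + b • ContinuousLinearMap.snd ℝ ℝ ℝ).prod
    (c • ContinuousLinearMap.fst ℝ ℝ ℝ + d • ContinuousLinearMap.snd ℝ ℝ ℝ)

theorem affLin_apply (a b c d : ℝ) (w : ℝ × ℝ) :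
    affLin a b c d w = (a * w.1 + b * w.2, c * w.1 + d * w.2) := by
  simp [affLin]

theorem applyAff_eq_affLin_add (a b c d : ℝ) (v w : ℝ × ℝ) :
    applyAff a b c d v w = affLin a b c d w + v := by
  rw [affLin_apply, applyAff, Prod.mk_add_mk]

theorem det2_self (x : ℝ × ℝ) : det2 x x = 0 := by
  rw [det2, mul_comm, sub_self]

theorem affLin_cramer (x y w : ℝ × ℝ) :
    affLin y.2 (-y.1) (-x.2) x.1 w = (det2 w y, det2 x w) := by
  rw [affLin_apply, det2, det2, Prod.mk.injEq]
  constructor <;> ring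

theorem affLin_cramer_eq_normalForm {E₂ E₃ E₄ E₅ : ℝ × ℝ} {μ : ℝ} (h₂₃ : det2 E₂ E₃ = 1)
    (h₂₄ : det2 E₂ E₄ = 0) (h₄₃ : det2 E₄ E₃ = 0) (h₅₃ : det2 E₅ E₃ = 0)
    (h₂₅ : det2 E₂ E₅ = μ) (u : ℝ) :
    affLin E₃.2 (-E₃.1) (-E₂.2) E₂.1 (u ^ 2 • E₂ + u ^ 3 • E₃ + u ^ 4 • E₄ + u ^ 5 • E₅) =
      (u ^ 2, u ^ 3 + μ * u ^ 5) := by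
  simp only [map_add, map_smul, affLin_cramer, det2_self, h₂₃, h₂₄, h₄₃, h₅₃, h₂₅,
    Prod.smul_mk, smul_eq_mul, Prod.mk_add_mk, Prod.mk.injEq]
  constructor <;> ring

theorem Asymptotics.IsLittleO.comp_isBigO_id {E : Type*} [NormedAddCommGroup E] {R : ℝ → E}
    {n : ℕ} (hR : R =o[𝓝 0] (· ^ n)) {T : ℝ → ℝ} (hT : T =O[𝓝 0] fun u => u) :
    (R ∘ T) =o[𝓝 0] (· ^ n) :=
  (hR.comp_tendsto (hT.trans_tendsto tendsto_id)).trans_isBigO (hT.pow n)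

section Jet

variable {E : Type*} [NormedAddCommGroup E] [NormedSpace ℝ E]

theorem isBigO_pow_of_eq_pow_smul {f g : ℝ → E} (n : ℕ) (hg : ContinuousAt g 0)
    (hf : ∀ u, f u = u ^ n • g u) : f =O[𝓝 0] (· ^ n) := by
  simpa [← funext hf] using (isBigO_refl (fun u : ℝ => u ^ n) (𝓝 0)).smul (hg.isBigO_one ℝ)

theorem quartic_isBigO_id (α β p q : ℝ) :
    (fun u => α * u + β * u ^ 2 + p * u ^ 3 + q * u ^ 4) =O[𝓝 0] fun u => u := by
  simpa using isBigO_pow_of_eq_pow_smul 1 (g := fun u => α + β * u + p * u ^ 2 + q * u ^ 3)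
    (by fun_prop) fun u => by rw [smul_eq_mul]; ring

theorem hasDerivAt_quartic_zero (α β p q : ℝ) :
    HasDerivAt (fun u => α * u + β * u ^ 2 + p * u ^ 3 + q * u ^ 4) α 0 := by
  simpa using ((((hasDerivAt_id' (x := (0:ℝ))).const_mul α).fun_add
    ((hasDerivAt_pow 2 (0:ℝ)).const_mul β)).fun_add ((hasDerivAt_pow 3 (0:ℝ)).const_mul p)).fun_add
    ((hasDerivAt_pow 4 (0:ℝ)).const_mul q)

def cuspJet (e f m n : E) (t : ℝ) : E :=
  (t ^ 2 / 2) • e + (t ^ 3 / 6) • f + (t ^ 4 / 24) • m + (t ^ 5 / 120) • n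

theorem taylorWithinEval_five_of_deriv_eq_zero (γ : ℝ → E) (h1 : deriv γ 0 = 0) (t : ℝ) :
    taylorWithinEval γ 5 univ 0 t = γ 0 + cuspJet (iteratedDeriv 2 γ 0) (iteratedDeriv 3 γ 0)
      (iteratedDeriv 4 γ 0) (iteratedDeriv 5 γ 0) t := by
  simp only [taylor_within_apply, Finset.sum_range_succ, Finset.sum_range_zero,
    iteratedDerivWithin_univ, iteratedDeriv_zero, iteratedDeriv_one, h1, cuspJet, smul_zero,
    Nat.factorial, sub_zero]
  module

theorem isLittleO_sub_cuspJet {γ : ℝ → E} (hγ : ContDiff ℝ 5 γ) (h1 : deriv γ 0 = 0) :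
    (fun t => γ t - (γ 0 + cuspJet (iteratedDeriv 2 γ 0) (iteratedDeriv 3 γ 0)
      (iteratedDeriv 4 γ 0) (iteratedDeriv 5 γ 0) t)) =o[𝓝 0] (· ^ 5) := by
  have h := taylor_isLittleO_univ (x₀ := (0:ℝ)) hγ
  simp only [taylorWithinEval_five_of_deriv_eq_zero γ h1, sub_zero] at h
  exact h

def jetCoeff2 (e : E) (α : ℝ) : E := (α ^ 2 / 2) • e

def jetCoeff3 (e f : E) (α β : ℝ) : E := (α * β) • e + (α ^ 3 / 6) • f

def jetCoeff4 (e f m : E) (α β p : ℝ) : E :=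
  ((β ^ 2 + 2 * α * p) / 2) • e + (α ^ 2 * β / 2) • f + (α ^ 4 / 24) • m

def jetCoeff5 (e f m n : E) (α β p q : ℝ) : E :=
  (α * q + β * p) • e + ((α ^ 2 * p + α * β ^ 2) / 2) • f + (α ^ 3 * β / 6) • m +
    (α ^ 5 / 120) • n

theorem cuspJet_quartic_sub_isBigO (e f m n : E) (α β p q : ℝ) :
    (fun u => cuspJet e f m n (α * u + β * u ^ 2 + p * u ^ 3 + q * u ^ 4) -
      (u ^ 2 • jetCoeff2 e α + u ^ 3 • jetCoeff3 e f α β + u ^ 4 • jetCoeff4 e f m α β p +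
        u ^ 5 • jetCoeff5 e f m n α β p q)) =O[𝓝 0] (· ^ 6) := by
  -- `B` is the quartic divided by `u`, and `C = (B - α) / u`
  refine isBigO_pow_of_eq_pow_smul 6 (g := fun u =>
    let B := α + β * u + p * u ^ 2 + q * u ^ 3
    let C := β + p * u + q * u ^ 2
    (((p + q * u) ^ 2 + 2 * β * q) / 2) • e
      + ((3 * α ^ 2 * q + 3 * α * (p + q * u) * (C + β) + C ^ 3) / 6) • f
      + ((4 * α ^ 3 * (p + q * u) + 6 * α ^ 2 * C ^ 2 + 4 * α * u * C ^ 3 + u ^ 2 * C ^ 4) / 24) • m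
      + ((C * (B ^ 4 + α * B ^ 3 + α ^ 2 * B ^ 2 + α ^ 3 * B + α ^ 4)) / 120) • n)
    (by fun_prop) fun u => ?_
  simp only [cuspJet, jetCoeff2, jetCoeff3, jetCoeff4, jetCoeff5]
  module

end Jet

section Normalization

variable (e f m n : ℝ × ℝ) {α β p q : ℝ}

theorem det2_jetCoeff2_jetCoeff3 :
    det2 (jetCoeff2 e α) (jetCoeff3 e f α β) = α ^ 5 * det2 e f / 12 := by
  simp only [jetCoeff2, jetCoeff3, det2, Prod.smul_fst, Prod.smul_snd, Prod.fst_add,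
    Prod.snd_add, smul_eq_mul]
  ring

theorem det2_jetCoeff2_jetCoeff4 (hβ : 12 * det2 e f * β = -α ^ 2 * det2 e m) :
    det2 (jetCoeff2 e α) (jetCoeff4 e f m α β p) = 0 := by
  simp only [jetCoeff2, jetCoeff4, det2, Prod.smul_fst, Prod.smul_snd, Prod.fst_add,
    Prod.snd_add, smul_eq_mul] at hβ ⊢
  linear_combination α ^ 4 / 48 * hβ

theorem det2_jetCoeff4_jetCoeff3 (hβ : 12 * det2 e f * β = -α ^ 2 * det2 e m)
    (hp : 24 * det2 e f * α * p = α ^ 4 * det2 f m - 12 * det2 e f * β ^ 2) :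
    det2 (jetCoeff4 e f m α β p) (jetCoeff3 e f α β) = 0 := by
  simp only [jetCoeff3, jetCoeff4, det2, Prod.smul_fst, Prod.smul_snd, Prod.fst_add,
    Prod.snd_add, smul_eq_mul] at hβ hp ⊢
  linear_combination α ^ 3 / 144 * hp - α ^ 3 * β / 24 * hβ

theorem det2_jetCoeff5_jetCoeff3
    (hq : α ^ 4 * det2 e f * q = -6 * det2 (jetCoeff5 e f m n α β p 0) (jetCoeff3 e f α β)) :
    det2 (jetCoeff5 e f m n α β p q) (jetCoeff3 e f α β) = 0 := by
  simp only [jetCoeff3, jetCoeff5, det2, Prod.smul_fst, Prod.smul_snd, Prod.fst_add,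
    Prod.snd_add, smul_eq_mul] at hq ⊢
  linear_combination hq / 6

theorem det2_jetCoeff2_jetCoeff5 (hβ : 12 * det2 e f * β = -α ^ 2 * det2 e m)
    (hp : 24 * det2 e f * α * p = α ^ 4 * det2 f m - 12 * det2 e f * β ^ 2) :
    5760 * det2 e f * det2 (jetCoeff2 e α) (jetCoeff5 e f m n α β p q) =
      α ^ 7 * (24 * det2 e f * det2 e n + 60 * det2 e f * det2 f m - 35 * det2 e m ^ 2) := by
  simp only [jetCoeff2, jetCoeff5, det2, Prod.smul_fst, Prod.smul_snd, Prod.fst_add,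
    Prod.snd_add, smul_eq_mul] at hβ hp ⊢
  linear_combination 60 * α ^ 3 * (e.1 * f.2 - e.2 * f.1) * hp
    + α ^ 3 * (35 * α ^ 2 * (e.1 * m.2 - e.2 * m.1) + 60 * (e.1 * f.2 - e.2 * f.1) * β) * hβ

end Normalization

theorem rpow_pow_of_mul_eq {x a : ℝ} (hx : 0 ≤ x) {n k : ℕ} (h : a * n = k) :
    (x ^ a) ^ n = x ^ k := by
  rw [← Real.rpow_natCast, ← Real.rpow_mul hx, h, Real.rpow_natCast]

theorem exists_jetCoeff_normalizing (e f m n : ℝ × ℝ) (hD : 0 < det2 e f) :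
    ∃ α > 0, ∃ β p q : ℝ,
      det2 (jetCoeff2 e α) (jetCoeff3 e f α β) = 1 ∧
      det2 (jetCoeff2 e α) (jetCoeff4 e f m α β p) = 0 ∧
      det2 (jetCoeff4 e f m α β p) (jetCoeff3 e f α β) = 0 ∧
      det2 (jetCoeff5 e f m n α β p q) (jetCoeff3 e f α β) = 0 ∧
      det2 (jetCoeff2 e α) (jetCoeff5 e f m n α β p q) =
        (24 * det2 e f * det2 e n + 60 * det2 e f * det2 f m - 35 * det2 e m ^ 2)
          / |det2 e f| ^ ((12:ℝ)/5) / (80 * (54:ℝ) ^ ((1:ℝ)/5)) := by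
  obtain ⟨α, hα, hα5⟩ : ∃ α > 0, α ^ 5 = 12 / det2 e f :=
    ⟨(12 / det2 e f) ^ ((1:ℝ)/5), by positivity,
      (rpow_pow_of_mul_eq (by positivity) (k := 1) (by norm_num)).trans (pow_one _)⟩
  have hconst : α ^ 7 * ((54:ℝ) ^ ((1:ℝ)/5) * det2 e f ^ ((12:ℝ)/5)) = 72 * det2 e f := by
    refine (pow_left_inj₀ (by positivity) (by positivity) (n := 5) (by norm_num)).mp ?_
    rw [mul_pow, mul_pow, rpow_pow_of_mul_eq (by norm_num) (k := 1) (by norm_num),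
      rpow_pow_of_mul_eq hD.le (k := 12) (by norm_num), show (α ^ 7) ^ 5 = (α ^ 5) ^ 7 by ring,
      hα5]
    field_simp
    norm_num
  obtain ⟨β, hβ⟩ : ∃ β, 12 * det2 e f * β = -α ^ 2 * det2 e m :=
    ⟨-α ^ 2 * det2 e m / (12 * det2 e f), by field_simp⟩
  obtain ⟨p, hp⟩ : ∃ p, 24 * det2 e f * α * p = α ^ 4 * det2 f m - 12 * det2 e f * β ^ 2 :=
    ⟨(α ^ 4 * det2 f m - 12 * det2 e f * β ^ 2) / (24 * det2 e f * α), by field_simp⟩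
  obtain ⟨q, hq⟩ : ∃ q, α ^ 4 * det2 e f * q =
      -6 * det2 (jetCoeff5 e f m n α β p 0) (jetCoeff3 e f α β) :=
    ⟨-6 * det2 (jetCoeff5 e f m n α β p 0) (jetCoeff3 e f α β) / (α ^ 4 * det2 e f),
      by field_simp⟩
  refine ⟨α, hα, β, p, q, ?_, det2_jetCoeff2_jetCoeff4 e f m hβ,
    det2_jetCoeff4_jetCoeff3 e f m hβ hp, det2_jetCoeff5_jetCoeff3 e f m n hq, ?_⟩
  · rw [det2_jetCoeff2_jetCoeff3, hα5]
    field_simp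
  · rw [abs_of_pos hD, div_div, eq_div_iff (by positivity)]
    refine mul_left_cancel₀ (show (72:ℝ) * det2 e f ≠ 0 by positivity) ?_
    linear_combination ((54:ℝ) ^ ((1:ℝ)/5) * det2 e f ^ ((12:ℝ)/5))
        * det2_jetCoeff2_jetCoeff5 e f m n (q := q) hβ hp
      + (24 * det2 e f * det2 e n + 60 * det2 e f * det2 f m - 35 * det2 e m ^ 2) * hconst

/-- Normal form of a positive 3/2-cusp: up to an orientation preserving equi-affine
transformation and parameter change, `γ` agrees with
`u ↦ (u², u³ + μ_A·u⁵/(80·⁵√54))` to order higher than `u⁵`. -/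
theorem stmt_5 (γ : ℝ → ℝ × ℝ) (hγ : ContDiff ℝ (⊤:ℕ∞) γ)
    (h1 : deriv γ 0 = 0)
    (h2 : 0 < det2 (iteratedDeriv 2 γ 0) (iteratedDeriv 3 γ 0)) :
    ∃ (a b c d : ℝ) (v : ℝ × ℝ), a * d - b * c = 1 ∧
      ∃ ε > (0:ℝ), ∃ t : ℝ → ℝ,
        ContDiffOn ℝ (⊤:ℕ∞) t (Set.Ioo (-ε) ε) ∧ t 0 = 0 ∧ 0 < deriv t 0 ∧
        Tendsto (fun u => (u ^ 5)⁻¹ •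
            (applyAff a b c d v (γ (t u))
              - (u ^ 2, u ^ 3 + muA γ * u ^ 5 / (80 * (54:ℝ) ^ ((1:ℝ)/5)))))
          (𝓝[≠] (0:ℝ)) (𝓝 (0 : ℝ × ℝ)) := by
  obtain ⟨α, hα, β, p, q, h₂₃, h₂₄, h₄₃, h₅₃, h₂₅⟩ := exists_jetCoeff_normalizing
    (iteratedDeriv 2 γ 0) (iteratedDeriv 3 γ 0) (iteratedDeriv 4 γ 0) (iteratedDeriv 5 γ 0) h2
  have hμ : det2 _ _ = muA γ / (80 * (54:ℝ) ^ ((1:ℝ)/5)) := h₂₅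
  set E₂ := jetCoeff2 (iteratedDeriv 2 γ 0) α
  set E₃ := jetCoeff3 (iteratedDeriv 2 γ 0) (iteratedDeriv 3 γ 0) α β
  set L := affLin E₃.2 (-E₃.1) (-E₂.2) E₂.1
  have htaylor := (isLittleO_sub_cuspJet (hγ.of_le (by norm_cast)) h1).comp_isBigO_id
    (quartic_isBigO_id α β p q)
  have hjet := (cuspJet_quartic_sub_isBigO (iteratedDeriv 2 γ 0) (iteratedDeriv 3 γ 0)
    (iteratedDeriv 4 γ 0) (iteratedDeriv 5 γ 0) α β p q).trans_isLittleO
    (isLittleO_pow_pow (by norm_num : 5 < 6))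
  refine ⟨E₃.2, -E₃.1, -E₂.2, E₂.1, -L (γ 0), by rw [← h₂₃, det2]; ring, 1, one_pos, _,
    (by fun_prop : ContDiff ℝ (⊤:ℕ∞) _).contDiffOn, by simp,
    (hasDerivAt_quartic_zero α β p q).deriv ▸ hα, ?_⟩
  refine (((L.isBigO_comp _ _).trans_isLittleO (htaylor.add hjet)).tendsto_inv_smul_nhds_zero
    |>.mono_left nhdsWithin_le_nhds).congr fun u => ?_
  rw [applyAff_eq_affLin_add, ← div_mul_eq_mul_div,
    ← affLin_cramer_eq_normalForm h₂₃ h₂₄ h₄₃ h₅₃ hμ u, ← map_neg, ← map_add, ← map_sub]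
  congr 2
  simp only [Function.comp_apply]
  abel
end
end

section
/- Let γ : ℝ → ℝ² be a C^∞ curve with a 3/2-cusp at t = 0, and assume [γ'(t), γ''(t)] ≠ 0 for all t ≠ 0 near 0. Then there exists a C^∞ function F on a neighborhood of 0 such that F(t) = s_A(t)²·κ_A(t) for all t ≠ 0 near 0; that is, the normalized affine curvature function (s_A)²·κ_A extends to a C^∞ function of t at t = 0. -/
noncomputable section
open Real Set Filter Topology

/-!
By Hadamard's lemma `γ' = t • a` with `a` smooth, and the cusp condition says exactly that
`h := [a, a']` does not vanish at `0`. Then `[γ', γ''] = t² h`, the numerator of `κ_A` is `t²`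
times a smooth function `N`, and the substitution `u = t v` gives
`s_A(t) = t · (t²)^{1/3} · G(t)` with `G(t) = ∫₀¹ (v²)^{1/3} |h(t v)|^{1/3} dv`, which is smooth
because `|h|^{1/3}` is smooth where `h ≠ 0`. Writing `τ = (t²)^{1/3}`, so that `τ³ = t²`, all
powers of `t` cancel: `s_A² κ_A = G² N / (9 |h|^{8/3})`.
-/

open scoped ContDiff

section ParametricIntegral

variable {E : Type*} [NormedAddCommGroup E] [NormedSpace ℝ E]

theorem hasDerivAt_integral_smul_comp_mul {c : ℝ → ℝ} {w : ℝ → E} (hc : Continuous c)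
    (hw : ContDiff ℝ 1 w) (t₀ : ℝ) :
    HasDerivAt (fun t => ∫ v in (0:ℝ)..1, c v • w (t * v))
      (∫ v in (0:ℝ)..1, (v * c v) • deriv w (t₀ * v)) t₀ := by
  have hw' : Continuous (deriv w) := hw.continuous_deriv le_rfl
  have hF' : Continuous fun p : ℝ × ℝ => (p.2 * c p.2) • deriv w (p.1 * p.2) := by fun_prop
  obtain ⟨M, hM⟩ := ((isCompact_closedBall t₀ 1).prod (isCompact_Icc (a := 0) (b := 1))
    ).exists_bound_of_continuousOn hF'.continuousOn
  refine (intervalIntegral.hasDerivAt_integral_of_dominated_loc_of_deriv_le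
    (F := fun t v => c v • w (t * v)) (F' := fun t v => (v * c v) • deriv w (t * v))
    (bound := fun _ => M)
    (Metric.ball_mem_nhds t₀ one_pos) (.of_forall fun _ => by fun_prop)
    ((by fun_prop : Continuous _).intervalIntegrable _ _) (by fun_prop) ?_
    intervalIntegrable_const ?_).2
  · refine .of_forall fun v hv x hx => hM (x, v) ⟨Metric.ball_subset_closedBall hx, ?_⟩
    rw [Set.uIoc_of_le zero_le_one] at hv
    exact Set.Ioc_subset_Icc_self hv
  · refine .of_forall fun v _ x _ => ?_
    have hwx := (hw.differentiable one_ne_zero (x * v)).hasDerivAt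
    convert (hwx.scomp x (hasDerivAt_mul_const v)).const_smul (c v) using 1
    · rfl
    · rw [smul_smul, mul_comm]

theorem contDiff_integral_smul_comp_mul {c : ℝ → ℝ} {w : ℝ → E} (hc : Continuous c) {n : ℕ}
    (hw : ContDiff ℝ n w) : ContDiff ℝ n fun t => ∫ v in (0:ℝ)..1, c v • w (t * v) := by
  induction n generalizing c w with
  | zero =>
    have := hw.continuous
    exact contDiff_zero.2 (by fun_prop)
  | succ n ih =>
    have hw1 : ContDiff ℝ 1 w := hw.of_le (by exact_mod_cast Nat.le_add_left 1 n)
    rw [Nat.cast_succ, contDiff_succ_iff_deriv] at hw ⊢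
    refine ⟨fun t => (hasDerivAt_integral_smul_comp_mul hc hw1 t).differentiableAt,
      by simp, ?_⟩
    rw [funext fun t => (hasDerivAt_integral_smul_comp_mul hc hw1 t).deriv]
    exact ih (by fun_prop) hw.2.2

theorem contDiff_infty_integral_smul_comp_mul {c : ℝ → ℝ} {w : ℝ → E} (hc : Continuous c)
    (hw : ContDiff ℝ ∞ w) : ContDiff ℝ ∞ fun t => ∫ v in (0:ℝ)..1, c v • w (t * v) :=
  contDiff_infty.2 fun n =>
    contDiff_integral_smul_comp_mul hc (hw.of_le (by exact_mod_cast le_top))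

theorem exists_contDiff_eq_smul_of_eq_zero [CompleteSpace E] {f : ℝ → E} (hf : ContDiff ℝ ∞ f)
    (h0 : f 0 = 0) :
    ∃ a : ℝ → E, ContDiff ℝ ∞ a ∧ ∀ t, f t = t • a t := by
  have hf' := (contDiff_infty_iff_deriv.mp hf).2
  refine ⟨fun t => ∫ v in (0:ℝ)..1, deriv f (t * v), by
    simpa using contDiff_infty_integral_smul_comp_mul (c := 1) continuous_const hf', fun t => ?_⟩
  have := intervalIntegral.smul_integral_comp_mul_left (deriv f) t (a := 0) (b := 1)
  rw [mul_zero, mul_one] at this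
  rw [this, intervalIntegral.integral_deriv_eq_sub (fun x _ => hf.differentiable (by simp) x)
    (hf'.continuous.intervalIntegrable _ _), h0, sub_zero]

end ParametricIntegral

theorem iteratedDeriv_succ_fun_id_smul {E : Type*} [NormedAddCommGroup E] [NormedSpace ℝ E]
    {a : ℝ → E} (ha : ContDiff ℝ ∞ a) (k : ℕ) :
    iteratedDeriv (k + 1) (fun t => t • a t) =
      fun t => t • iteratedDeriv (k + 1) a t + (k + 1 : ℝ) • iteratedDeriv k a t := by
  have hd : ∀ j t, HasDerivAt (iteratedDeriv j a) (iteratedDeriv (j + 1) a t) t := fun j t => by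
    rw [iteratedDeriv_succ]
    exact (ha.differentiable_iteratedDeriv j
      (by exact_mod_cast ENat.natCast_lt_top j) t).hasDerivAt
  induction k with
  | zero =>
    ext1 t
    rw [iteratedDeriv_one]
    refine HasDerivAt.deriv ?_
    convert (hasDerivAt_id t).smul (hd 0 t) using 1
    · rfl
    · simp
  | succ k ih =>
    ext1 t
    rw [iteratedDeriv_succ, ih]
    refine HasDerivAt.deriv ?_
    convert ((hasDerivAt_id t).smul (hd (k + 1) t)).add ((hd k t).const_smul ((k : ℝ) + 1))
      using 1
    · rfl
    · simp only [id, one_smul, Nat.cast_succ]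
      module

section Smoothing

variable {F : Type*} [NormedAddCommGroup F] [NormedSpace ℝ F]

theorem exists_contDiff_half_le_eq_of_le {q : F → ℝ} (hq : ContDiff ℝ ∞ q) {m : ℝ}
    (hm : 0 < m) :
    ∃ p : F → ℝ, ContDiff ℝ ∞ p ∧ (∀ x, m / 2 ≤ p x) ∧ ∀ x, m ≤ q x → p x = q x := by
  set ρ : F → ℝ := fun x => Real.smoothTransition (2 * q x / m - 1)
  have hρ : ContDiff ℝ ∞ ρ := Real.smoothTransition.contDiff.comp (by fun_prop)
  refine ⟨fun x => ρ x * q x + (1 - ρ x) * (m / 2), by fun_prop, fun x => ?_, fun x hx => ?_⟩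
  · rcases le_or_gt (m / 2) (q x) with h | h
    · nlinarith [Real.smoothTransition.nonneg (2 * q x / m - 1)]
    · have : ρ x = 0 := Real.smoothTransition.zero_of_nonpos (by
        rw [sub_nonpos, div_le_one hm]; linarith)
      simp [this]
  · have : ρ x = 1 := Real.smoothTransition.one_of_one_le (by
      rw [le_sub_iff_add_le, le_div_iff₀ hm]; linarith)
    simp [this]

theorem exists_contDiff_pos_eventuallyEq_abs_rpow {h : F → ℝ} (hh : ContDiff ℝ ∞ h) {x₀ : F}
    (hx₀ : h x₀ ≠ 0) (r : ℝ) :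
    ∃ w : F → ℝ, ContDiff ℝ ∞ w ∧ (∀ x, 0 < w x) ∧ ∀ᶠ x in 𝓝 x₀, w x = |h x| ^ r := by
  set m := h x₀ ^ 2 / 2
  have hm : 0 < m := by positivity
  obtain ⟨p, hp, hpm, hpq⟩ := exists_contDiff_half_le_eq_of_le (hh.pow 2) hm
  have hp_pos : ∀ x, 0 < p x := fun x => (half_pos hm).trans_le (hpm x)
  refine ⟨fun x => p x ^ (r / 2), hp.rpow_const_of_ne fun x => (hp_pos x).ne',
    fun x => Real.rpow_pos_of_pos (hp_pos x) _, ?_⟩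
  have hm_lt : m < h x₀ ^ 2 := by
    simp only [m]
    linarith [pow_pos (abs_pos.2 hx₀) 2, sq_abs (h x₀)]
  filter_upwards [(hh.pow 2).continuous.continuousAt.eventually (lt_mem_nhds hm_lt)] with x hx
  rw [hpq x hx.le, ← sq_abs, ← Real.rpow_natCast, ← Real.rpow_mul (abs_nonneg _)]
  ring_nf

end Smoothing

theorem ContDiff.det2 {n : WithTop ℕ∞} {f g : ℝ → ℝ × ℝ} (hf : ContDiff ℝ n f)
    (hg : ContDiff ℝ n g) : ContDiff ℝ n fun t => _root_.det2 (f t) (g t) := by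
  unfold _root_.det2
  fun_prop

theorem integral_sq_rpow_mul (r : ℝ) (w : ℝ → ℝ) (t : ℝ) :
    ∫ u in (0:ℝ)..t, (u ^ 2) ^ r * w u =
      t * (t ^ 2) ^ r * ∫ v in (0:ℝ)..1, (v ^ 2) ^ r * w (t * v) := by
  have := intervalIntegral.smul_integral_comp_mul_left (fun u => (u ^ 2) ^ r * w u) t
    (a := 0) (b := 1)
  rw [mul_zero, mul_one] at this
  rw [← this, smul_eq_mul, ← intervalIntegral.integral_const_mul,
    ← intervalIntegral.integral_const_mul]
  congr 1
  funext v
  simp only [mul_pow, Real.mul_rpow (sq_nonneg _) (sq_nonneg _)]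
  ring

/-- When `γ' = t • a`, the numerator of `κ_A` is `t²` times this
(`kappaA_eq_of_deriv_eq_smul`). -/
def cuspNumerator (γ a : ℝ → ℝ × ℝ) (t : ℝ) : ℝ :=
  3 * t * det2 (a t) (deriv a t) * det2 (a t) (iteratedDeriv 4 γ t)
    + 12 * det2 (a t) (deriv a t) * det2 (iteratedDeriv 2 γ t) (iteratedDeriv 3 γ t)
    - 5 * det2 (a t) (iteratedDeriv 3 γ t) ^ 2

theorem ContDiff.cuspNumerator {γ a : ℝ → ℝ × ℝ} (hγ : ContDiff ℝ ∞ γ) (ha : ContDiff ℝ ∞ a) :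
    ContDiff ℝ ∞ (_root_.cuspNumerator γ a) := by
  have hγk : ∀ k, ContDiff ℝ ∞ (iteratedDeriv k γ) := fun k => by
    rw [iteratedDeriv_eq_iterate]; exact hγ.iterate_deriv k
  have ha' : ContDiff ℝ ∞ (deriv a) := (contDiff_infty_iff_deriv.mp ha).2
  have := ha.det2 ha'
  have := ha.det2 (hγk 4)
  have := (hγk 2).det2 (hγk 3)
  have := ha.det2 (hγk 3)
  unfold _root_.cuspNumerator
  fun_prop

section DerivEqSmul

variable {γ a : ℝ → ℝ × ℝ}

theorem iteratedDeriv_two_of_deriv_eq_smul (ha : ContDiff ℝ ∞ a)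
    (hγa : deriv γ = fun t => t • a t) (t : ℝ) : iteratedDeriv 2 γ t = t • deriv a t + a t := by
  rw [iteratedDeriv_succ', hγa, iteratedDeriv_succ_fun_id_smul ha 0]
  simp

theorem det2_iteratedDeriv_two_three_zero_of_deriv_eq_smul (ha : ContDiff ℝ ∞ a)
    (hγa : deriv γ = fun t => t • a t) :
    det2 (iteratedDeriv 2 γ 0) (iteratedDeriv 3 γ 0) = 2 * det2 (a 0) (deriv a 0) := by
  rw [iteratedDeriv_two_of_deriv_eq_smul ha hγa, iteratedDeriv_succ', hγa,
    iteratedDeriv_succ_fun_id_smul ha 1, iteratedDeriv_one]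
  simp only [det2, Prod.smul_fst, Prod.smul_snd, Prod.fst_add, Prod.snd_add, smul_eq_mul]
  ring

theorem det2_deriv_iteratedDeriv_two_of_deriv_eq_smul (ha : ContDiff ℝ ∞ a)
    (hγa : deriv γ = fun t => t • a t) (t : ℝ) :
    det2 (deriv γ t) (iteratedDeriv 2 γ t) = t ^ 2 * det2 (a t) (deriv a t) := by
  rw [iteratedDeriv_two_of_deriv_eq_smul ha hγa, hγa]
  simp only [det2, Prod.smul_fst, Prod.smul_snd, Prod.fst_add, Prod.snd_add, smul_eq_mul]
  ring

theorem kappaA_eq_of_deriv_eq_smul (ha : ContDiff ℝ ∞ a) (hγa : deriv γ = fun t => t • a t)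
    (t : ℝ) : kappaA γ t = t ^ 2 * cuspNumerator γ a t /
      (9 * ((t ^ 2) ^ (1 / 3 : ℝ) * |det2 (a t) (deriv a t)| ^ (1 / 3 : ℝ)) ^ 8) := by
  have hpow : ∀ x : ℝ, 0 ≤ x → x ^ (8 / 3 : ℝ) = (x ^ (1 / 3 : ℝ)) ^ 8 := fun x hx => by
    rw [← Real.rpow_natCast, ← Real.rpow_mul hx]
    norm_num
  rw [kappaA, det2_deriv_iteratedDeriv_two_of_deriv_eq_smul ha hγa, abs_mul,
    abs_of_nonneg (sq_nonneg t), hpow _ (by positivity),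
    Real.mul_rpow (sq_nonneg t) (abs_nonneg _), cuspNumerator]
  congr 1
  rw [hγa]
  simp only [det2, Prod.smul_fst, Prod.smul_snd, smul_eq_mul]
  ring

theorem sA_eq_of_deriv_eq_smul (ha : ContDiff ℝ ∞ a) (hγa : deriv γ = fun t => t • a t)
    {w : ℝ → ℝ} {t : ℝ} (hw : ∀ u ∈ uIcc 0 t, w u = |det2 (a u) (deriv a u)| ^ (1 / 3 : ℝ)) :
    sA γ t = t * (t ^ 2) ^ (1 / 3 : ℝ) * ∫ v in (0:ℝ)..1, (v ^ 2) ^ (1 / 3 : ℝ) * w (t * v) := by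
  rw [sA, ← integral_sq_rpow_mul]
  refine intervalIntegral.integral_congr fun u hu => ?_
  rw [det2_deriv_iteratedDeriv_two_of_deriv_eq_smul ha hγa, hw u hu, abs_mul,
    abs_of_nonneg (sq_nonneg u), Real.mul_rpow (sq_nonneg u) (abs_nonneg _)]

end DerivEqSmul

theorem stmt_7_general (γ : ℝ → ℝ × ℝ) (hγ : ContDiff ℝ (⊤:ℕ∞) γ) (hcusp : HasCusp γ) :
    ∃ ε > (0:ℝ), ∃ F : ℝ → ℝ, ContDiffOn ℝ (⊤:ℕ∞) F (Set.Ioo (-ε) ε) ∧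
      ∀ t ∈ Set.Ioo (-ε) ε, t ≠ 0 → F t = sA γ t ^ 2 * kappaA γ t := by
  obtain ⟨a, ha, hγa⟩ :=
    exists_contDiff_eq_smul_of_eq_zero (contDiff_infty_iff_deriv.mp hγ).2 hcusp.1
  replace hγa : deriv γ = fun t => t • a t := funext hγa
  have ha' : ContDiff ℝ ∞ (deriv a) := (contDiff_infty_iff_deriv.mp ha).2
  have h0 : det2 (a 0) (deriv a 0) ≠ 0 := fun h => hcusp.2 <| by
    rw [det2_iteratedDeriv_two_three_zero_of_deriv_eq_smul ha hγa, h, mul_zero]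
  obtain ⟨w, hw, hw_pos, hw_eq⟩ :=
    exists_contDiff_pos_eventuallyEq_abs_rpow (ha.det2 ha') h0 (1 / 3)
  obtain ⟨ε, hε, hεw⟩ := Metric.eventually_nhds_iff_ball.1 hw_eq
  set G := fun t => ∫ v in (0:ℝ)..1, ((v ^ 2) ^ (1 / 3 : ℝ)) • w (t * v)
  have hG : ContDiff ℝ ∞ G := contDiff_infty_integral_smul_comp_mul
    ((Real.continuous_rpow_const (by norm_num)).comp (continuous_pow 2)) hw
  refine ⟨ε, hε, fun t => G t ^ 2 * cuspNumerator γ a t / (9 * w t ^ 8), ?_, fun t ht ht0 => ?_⟩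
  · exact ((hG.pow 2).mul (hγ.cuspNumerator ha)).div (contDiff_const.mul (hw.pow 8))
      (fun t => by have := hw_pos t; positivity) |>.contDiffOn
  have hball : Ioo (-ε) ε = Metric.ball 0 ε := by simp [Real.ball_eq_Ioo]
  set τ := (t ^ 2) ^ (1 / 3 : ℝ)
  have hτ : τ ^ 3 = t ^ 2 := by
    rw [← Real.rpow_natCast, ← Real.rpow_mul (sq_nonneg t)]
    norm_num
  have hτ0 : τ ≠ 0 := (Real.rpow_pos_of_pos (by positivity) _).ne'
  rw [sA_eq_of_deriv_eq_smul ha hγa (w := w) fun u hu => hεw u ?_,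
    kappaA_eq_of_deriv_eq_smul ha hγa, ← hεw t (hball ▸ ht)]
  · have := (hw_pos t).ne'
    field_simp
    linear_combination G t ^ 2 * cuspNumerator γ a t * (τ ^ 3 + t ^ 2) * hτ
  · exact hball ▸ (ordConnected_Ioo.uIcc_subset (by simpa using hε) ht hu)

/-- At a 3/2-cusp (with no inflection points nearby), the normalized affine curvature
`(s_A)²·κ_A` extends to a `C^∞` function of `t` at `t = 0`. -/
theorem stmt_7 (γ : ℝ → ℝ × ℝ) (hγ : ContDiff ℝ (⊤:ℕ∞) γ) (hcusp : HasCusp γ)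
    (hreg : ∀ᶠ t in 𝓝[≠] (0:ℝ), det2 (deriv γ t) (iteratedDeriv 2 γ t) ≠ 0) :
    ∃ ε > (0:ℝ), ∃ F : ℝ → ℝ, ContDiffOn ℝ (⊤:ℕ∞) F (Set.Ioo (-ε) ε) ∧
      ∀ t ∈ Set.Ioo (-ε) ε, t ≠ 0 → F t = sA γ t ^ 2 * kappaA γ t :=
  stmt_7_general γ hγ hcusp
end
end

section
/- Let γ : ℝ → ℝ² be a C^∞ curve with a 3/2-cusp at t = 0, with [γ'(t), γ''(t)] ≠ 0 for t ≠ 0 near 0, and let F be the C^∞ extension of the normalized affine curvature function (s_A)²·κ_A at t = 0. Then F(0) = 4/25 and F'(0) = 0. -/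
noncomputable section
open Real Set Filter Topology

/-!
Write `e_ij = [γ⁽ⁱ⁾, γ⁽ʲ⁾]`, `μ = e₂₃(0) ≠ 0` and `p = e₂₄(0)`. Since
`e_ij' = e_{i+1,j} + e_{i,j+1}` and `e_1j(0) = 0`, integrating `e₂₃ + e₁₄ = μ + 2pt + o(t)` twice
gives `e₁₃ = t (μ + pt + o(t))` and `e₁₂ = t² (μ/2 + pt/3 + o(t))` as `t → 0⁺`. Hence
`|e₁₂|^{1/3} = t^{2/3} (m + qt + o(t))` with `m = |μ/2|^{1/3}`, and integrating once more,
`s_A = t^{5/3} (3m/5 + 3qt/8 + o(t))`. After dividing each factor by the right power of `t`,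
`s_A² κ_A` is a rational expression in functions with first-order expansions `c₀ + c₁ t + o(t)`,
and multiplying out gives `4/25 + 0·t + o(t)`. Since `F` is differentiable at `0` and equals
`s_A² κ_A` for `t > 0`, `F(0)` and `F'(0)` are read off from this one-sided expansion.
-/

open Asymptotics Function

theorem isLittleO_rpow_add_one_of_hasDerivAt {f f' : ℝ → ℝ} {a : ℝ} (ha : 0 ≤ a)
    (hf : ∀ t, HasDerivAt f (f' t) t) (h0 : f 0 = 0) (h : f' =o[𝓝[>] 0] fun t => t ^ a) :
    f =o[𝓝[>] 0] fun t => t ^ (a + 1) := by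
  rw [isLittleO_iff] at h ⊢
  intro c hc
  obtain ⟨δ, hδ, hbound⟩ := mem_nhdsGT_iff_exists_Ioo_subset.1 (h hc)
  filter_upwards [Ioo_mem_nhdsGT hδ] with t ht
  obtain ⟨ξ, hξ, hslope⟩ := exists_hasDerivAt_eq_slope f f' ht.1
    (fun x _ => (hf x).continuousAt.continuousWithinAt) (fun x _ => hf x)
  have hξ' : ‖f' ξ‖ ≤ c * ‖ξ ^ a‖ := hbound ⟨hξ.1, hξ.2.trans ht.2⟩
  rw [h0, sub_zero, sub_zero, eq_div_iff ht.1.ne'] at hslope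
  rw [Real.norm_of_nonneg (Real.rpow_nonneg hξ.1.le a)] at hξ'
  calc ‖f t‖ = ‖f' ξ‖ * t := by rw [← hslope, norm_mul, Real.norm_of_nonneg ht.1.le]
    _ ≤ c * t ^ a * t := mul_le_mul_of_nonneg_right
        (hξ'.trans (mul_le_mul_of_nonneg_left (Real.rpow_le_rpow hξ.1.le hξ.2.le ha) hc.le))
        ht.1.le
    _ = c * ‖t ^ (a + 1)‖ := by
      rw [Real.norm_of_nonneg (Real.rpow_nonneg ht.1.le _), Real.rpow_add_one ht.1.ne',
        mul_assoc]

theorem hasDerivAt_abs_rpow_of_ne_zero {c : ℝ} (hc : c ≠ 0) (r : ℝ) :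
    HasDerivAt (fun x => |x| ^ r) (r * |c| ^ r / c) c := by
  have hc' : |c| ≠ 0 := abs_ne_zero.2 hc
  refine ((Real.hasDerivAt_rpow_const (Or.inl hc')).comp c (hasDerivAt_abs hc)).congr_deriv ?_
  rw [Real.rpow_sub_one hc']
  rcases hc.lt_or_gt with h | h
  · simp only [abs_of_neg h, h, _root_.sign_neg, SignType.coe_neg, SignType.coe_one, mul_neg,
      mul_one]
    field_simp
  · simp [h, abs_of_pos h, mul_div_assoc]

/-- `f t = c₀ + c₁ t + o(t)` as `t → 0⁺`, encoded as a one-sided derivative of `f` with its value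
at `0` replaced by `c₀`. -/
def HasRightExpansion (f : ℝ → ℝ) (c₀ c₁ : ℝ) : Prop :=
  HasDerivWithinAt (update f 0 c₀) c₁ (Ioi 0) 0

namespace HasRightExpansion

variable {f g F G : ℝ → ℝ} {a₀ a₁ b₀ b₁ c₀ c₁ : ℝ}

theorem of_eqOn {h : ℝ → ℝ} (hh : HasDerivWithinAt h c₁ (Ioi 0) 0) (hfh : EqOn f h (Ioi 0)) :
    HasRightExpansion f (h 0) c₁ :=
  hh.congr (fun t ht => by simp [update_of_ne (mem_Ioi.1 ht).ne', hfh ht]) (by simp)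

theorem congr (hf : HasRightExpansion f c₀ c₁) (hfg : EqOn f g (Ioi 0)) :
    HasRightExpansion g c₀ c₁ := by
  simpa using of_eqOn hf fun t ht => by simp [update_of_ne (mem_Ioi.1 ht).ne', hfg ht]

theorem add (hf : HasRightExpansion f a₀ a₁) (hg : HasRightExpansion g b₀ b₁) :
    HasRightExpansion (fun t => f t + g t) (a₀ + b₀) (a₁ + b₁) := by
  simpa using of_eqOn (HasDerivWithinAt.add hf hg) fun t ht => by
    simp [update_of_ne (mem_Ioi.1 ht).ne']

theorem sub (hf : HasRightExpansion f a₀ a₁) (hg : HasRightExpansion g b₀ b₁) :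
    HasRightExpansion (fun t => f t - g t) (a₀ - b₀) (a₁ - b₁) := by
  simpa using of_eqOn (HasDerivWithinAt.sub hf hg) fun t ht => by
    simp [update_of_ne (mem_Ioi.1 ht).ne']

theorem const_mul (c : ℝ) (hf : HasRightExpansion f a₀ a₁) :
    HasRightExpansion (fun t => c * f t) (c * a₀) (c * a₁) := by
  simpa using of_eqOn (HasDerivWithinAt.const_mul c hf) fun t ht => by
    simp [update_of_ne (mem_Ioi.1 ht).ne']

theorem mul (hf : HasRightExpansion f a₀ a₁) (hg : HasRightExpansion g b₀ b₁) :
    HasRightExpansion (fun t => f t * g t) (a₀ * b₀) (a₁ * b₀ + a₀ * b₁) := by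
  simpa using of_eqOn (HasDerivWithinAt.mul hf hg) fun t ht => by
    simp [update_of_ne (mem_Ioi.1 ht).ne']

theorem div (hf : HasRightExpansion f a₀ a₁) (hg : HasRightExpansion g b₀ b₁) (hb : b₀ ≠ 0) :
    HasRightExpansion (fun t => f t / g t) (a₀ / b₀) ((a₁ * b₀ - a₀ * b₁) / b₀ ^ 2) := by
  simpa using of_eqOn (HasDerivWithinAt.div hf hg (by simpa using hb)) fun t ht => by
    simp [update_of_ne (mem_Ioi.1 ht).ne']

theorem comp {φ : ℝ → ℝ} {φ' : ℝ} (hφ : HasDerivAt φ φ' c₀) (hf : HasRightExpansion f c₀ c₁) :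
    HasRightExpansion (fun t => φ (f t)) (φ c₀) (φ' * c₁) := by
  have hφ' : HasDerivAt φ φ' (update f 0 c₀ 0) := by simpa using hφ
  simpa using of_eqOn (hφ'.comp_hasDerivWithinAt 0 hf) fun t ht => by
    simp [update_of_ne (mem_Ioi.1 ht).ne']

theorem _root_.HasDerivAt.hasRightExpansion (hf : HasDerivAt f c₁ 0) :
    HasRightExpansion f (f 0) c₁ :=
  of_eqOn hf.hasDerivWithinAt fun _ _ => rfl

theorem div_iff (hg : ∀ᶠ t in 𝓝[>] 0, g t ≠ 0) :
    HasRightExpansion (fun t => f t / g t) c₀ c₁ ↔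
      (fun t => f t - g t * (c₀ + c₁ * t)) =o[𝓝[>] 0] fun t => g t * t := by
  have hpos : ∀ᶠ t in 𝓝[>] (0:ℝ), 0 < t := eventually_mem_nhdsWithin
  rw [HasRightExpansion, hasDerivWithinAt_iff_isLittleO]
  constructor
  · intro h
    refine ((isBigO_refl g _).mul_isLittleO h).congr' ?_ ?_
    · filter_upwards [hg, hpos] with t hgt ht
      simp only [update_of_ne ht.ne', update_self, sub_zero, smul_eq_mul]
      field_simp
      ring
    · simp
  · intro h
    refine ((isBigO_refl (fun t => (g t)⁻¹) _).mul_isLittleO h).congr' ?_ ?_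
    · filter_upwards [hg, hpos] with t hgt ht
      simp only [update_of_ne ht.ne', update_self, sub_zero, smul_eq_mul]
      field_simp
      ring
    · filter_upwards [hg] with t hgt
      field_simp
      simp

theorem div_rpow_add_one_of_hasDerivAt {f' : ℝ → ℝ} {a : ℝ} (ha : 0 ≤ a)
    (hf : ∀ t, HasDerivAt f (f' t) t) (h0 : f 0 = 0)
    (h : HasRightExpansion (fun t => f' t / t ^ a) c₀ c₁) :
    HasRightExpansion (fun t => f t / t ^ (a + 1)) (c₀ / (a + 1)) (c₁ / (a + 2)) := by
  have hpos : ∀ᶠ t in 𝓝[>] (0:ℝ), 0 < t := eventually_mem_nhdsWithin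
  have hne : ∀ b : ℝ, ∀ᶠ t in 𝓝[>] (0:ℝ), t ^ b ≠ 0 := fun b =>
    hpos.mono fun t ht => (Real.rpow_pos_of_pos ht b).ne'
  rw [div_iff (hne a)] at h
  rw [div_iff (hne (a + 1))]
  set P : ℝ → ℝ := fun t => c₀ / (a + 1) * t ^ (a + 1) + c₁ / (a + 2) * t ^ (a + 2)
  have hP : ∀ t, HasDerivAt P (c₀ * t ^ a + c₁ * t ^ (a + 1)) t := fun t => by
    have h1 := Real.hasDerivAt_rpow_const (x := t) (p := a + 1) (Or.inr (by linarith))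
    have h2 := Real.hasDerivAt_rpow_const (x := t) (p := a + 2) (Or.inr (by linarith))
    refine ((h1.const_mul (c₀ / (a + 1))).add (h2.const_mul (c₁ / (a + 2)))).congr_deriv ?_
    rw [add_sub_cancel_right, show a + 2 - 1 = a + 1 by ring]
    field_simp [show a + 1 ≠ 0 by linarith, show a + 2 ≠ 0 by linarith]
  have hP0 : P 0 = 0 := by
    simp [P, Real.zero_rpow (by linarith : a + 1 ≠ 0), Real.zero_rpow (by linarith : a + 2 ≠ 0)]
  have hrem := isLittleO_rpow_add_one_of_hasDerivAt (a := a + 1) (by linarith)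
    (fun t => (hf t).sub (hP t)) (by simp [h0, hP0]) (h.congr' ?_ ?_)
  · refine hrem.congr' ?_ ?_
    · filter_upwards [hpos] with t ht
      simp only [P, Pi.sub_apply, Real.rpow_add ht, Real.rpow_one, Real.rpow_two]
      ring
    · filter_upwards [hpos] with t ht
      rw [Real.rpow_add_one ht.ne']
  · filter_upwards [hpos] with t ht
    rw [Real.rpow_add_one ht.ne']
    ring
  · filter_upwards [hpos] with t ht
    rw [Real.rpow_add_one ht.ne']

theorem eq_of_differentiableAt (h : HasRightExpansion G c₀ c₁) (hF : DifferentiableAt ℝ F 0)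
    (hFG : F =ᶠ[𝓝[>] 0] G) : F 0 = c₀ ∧ deriv F 0 = c₁ := by
  have hFG' : F =ᶠ[𝓝[>] 0] update G 0 c₀ := hFG.trans <|
    eventually_mem_nhdsWithin.mono fun t ht => (update_of_ne (mem_Ioi.1 ht).ne' _ _).symm
  have hF0 : F 0 = c₀ := by
    have hlim : Tendsto (update G 0 c₀) (𝓝[>] 0) (𝓝 c₀) := by
      simpa using h.continuousWithinAt.tendsto
    exact tendsto_nhds_unique (hF.continuousAt.tendsto.mono_left nhdsWithin_le_nhds)
      (hlim.congr' hFG'.symm)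
  exact ⟨hF0, (uniqueDiffWithinAt_Ioi 0).eq_deriv _ hF.hasDerivAt.hasDerivWithinAt
    (h.congr_of_eventuallyEq hFG' (by simp [hF0]))⟩

end HasRightExpansion

theorem HasDerivAt.det2 {f g : ℝ → ℝ × ℝ} {f' g' : ℝ × ℝ} {t : ℝ} (hf : HasDerivAt f f' t)
    (hg : HasDerivAt g g' t) :
    HasDerivAt (fun u => det2 (f u) (g u)) (det2 f' (g t) + det2 (f t) g') t := by
  have hfst {h : ℝ → ℝ × ℝ} {h'} (hh : HasDerivAt h h' t) : HasDerivAt (fun u => (h u).1) h'.1 t :=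
    (ContinuousLinearMap.fst ℝ ℝ ℝ).hasFDerivAt.comp_hasDerivAt t hh
  have hsnd {h : ℝ → ℝ × ℝ} {h'} (hh : HasDerivAt h h' t) : HasDerivAt (fun u => (h u).2) h'.2 t :=
    (ContinuousLinearMap.snd ℝ ℝ ℝ).hasFDerivAt.comp_hasDerivAt t hh
  refine (((hfst hf).mul (hsnd hg)).sub ((hsnd hf).mul (hfst hg))).congr_deriv ?_
  simp only [_root_.det2]
  ring

def detDeriv (γ : ℝ → ℝ × ℝ) (i j : ℕ) (t : ℝ) : ℝ :=
  det2 (iteratedDeriv i γ t) (iteratedDeriv j γ t)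

section Curve

variable {γ : ℝ → ℝ × ℝ}

theorem detDeriv_self (i : ℕ) (t : ℝ) : detDeriv γ i i t = 0 := by
  simp only [detDeriv, det2, mul_comm, sub_self]

theorem detDeriv_one_left_zero (h1 : deriv γ 0 = 0) (j : ℕ) :
    detDeriv γ 1 j 0 = 0 := by
  simp [detDeriv, det2, h1]

theorem hasDerivAt_detDeriv (hγ : ContDiff ℝ (⊤ : ℕ∞) γ) (i j : ℕ) (t : ℝ) :
    HasDerivAt (detDeriv γ i j) (detDeriv γ (i + 1) j t + detDeriv γ i (j + 1) t) t := by
  have hD (n : ℕ) : HasDerivAt (iteratedDeriv n γ) (iteratedDeriv (n + 1) γ t) t := by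
    rw [iteratedDeriv_succ]
    exact (hγ.differentiable_iteratedDeriv n (by exact_mod_cast WithTop.coe_lt_top _)
      t).hasDerivAt
  exact (hD i).det2 (hD j)

theorem hasRightExpansion_detDeriv_one_four (hγ : ContDiff ℝ (⊤ : ℕ∞) γ) (h1 : deriv γ 0 = 0) :
    HasRightExpansion (detDeriv γ 1 4) 0 (detDeriv γ 2 4 0) := by
  simpa [detDeriv_one_left_zero h1] using (hasDerivAt_detDeriv hγ 1 4 0).hasRightExpansion

theorem hasRightExpansion_detDeriv_two_three (hγ : ContDiff ℝ (⊤ : ℕ∞) γ) :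
    HasRightExpansion (detDeriv γ 2 3) (detDeriv γ 2 3 0) (detDeriv γ 2 4 0) := by
  simpa [detDeriv_self] using (hasDerivAt_detDeriv hγ 2 3 0).hasRightExpansion

theorem hasRightExpansion_detDeriv_one_three (hγ : ContDiff ℝ (⊤ : ℕ∞) γ) (h1 : deriv γ 0 = 0) :
    HasRightExpansion (fun t => detDeriv γ 1 3 t / t) (detDeriv γ 2 3 0) (detDeriv γ 2 4 0) := by
  have h := (hasRightExpansion_detDeriv_two_three hγ).add
    (hasRightExpansion_detDeriv_one_four hγ h1)
  have := HasRightExpansion.div_rpow_add_one_of_hasDerivAt le_rfl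
    (hasDerivAt_detDeriv hγ 1 3) (detDeriv_one_left_zero h1 3) (by simpa using h)
  norm_num at this
  exact this

theorem hasRightExpansion_detDeriv_one_two (hγ : ContDiff ℝ (⊤ : ℕ∞) γ) (h1 : deriv γ 0 = 0) :
    HasRightExpansion (fun t => detDeriv γ 1 2 t / t ^ 2)
      (detDeriv γ 2 3 0 / 2) (detDeriv γ 2 4 0 / 3) := by
  have := HasRightExpansion.div_rpow_add_one_of_hasDerivAt zero_le_one
    (hasDerivAt_detDeriv hγ 1 2) (detDeriv_one_left_zero h1 2)
    (by simpa [detDeriv_self] using hasRightExpansion_detDeriv_one_three hγ h1)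
  norm_num at this
  exact this

theorem hasDerivAt_sA (hγ : ContDiff ℝ (⊤ : ℕ∞) γ) (t : ℝ) :
    HasDerivAt (sA γ) (|detDeriv γ 1 2 t| ^ (1 / 3 : ℝ)) t := by
  have hdiff : Differentiable ℝ (detDeriv γ 1 2) := fun u =>
    (hasDerivAt_detDeriv hγ 1 2 u).differentiableAt
  have hcont : Continuous fun u => |detDeriv γ 1 2 u| ^ (1 / 3 : ℝ) :=
    hdiff.continuous.abs.rpow_const fun _ => Or.inr (by norm_num)
  have hsA : sA γ = fun u => ∫ x in (0 : ℝ)..u, |detDeriv γ 1 2 x| ^ (1 / 3 : ℝ) := by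
    funext u
    simp only [sA, detDeriv, iteratedDeriv_one]
  exact hsA ▸ (hcont.integral_hasStrictDerivAt 0 t).hasDerivAt

theorem sA_sq_mul_kappaA_eq {t : ℝ} (ht : 0 < t) :
    sA γ t ^ 2 * kappaA γ t =
      sA γ t / t ^ (5 / 3 : ℝ) * (sA γ t / t ^ (5 / 3 : ℝ)) *
        ((3 * detDeriv γ 1 2 t * detDeriv γ 1 4 t + 12 * detDeriv γ 1 2 t * detDeriv γ 2 3 t
          - 5 * detDeriv γ 1 3 t ^ 2) / t ^ 2) /
        (9 * |detDeriv γ 1 2 t / t ^ 2| ^ (8 / 3 : ℝ)) := by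
  have hpow : |detDeriv γ 1 2 t / t ^ 2| ^ (8 / 3 : ℝ) =
      |detDeriv γ 1 2 t| ^ (8 / 3 : ℝ) / (t ^ (5 / 3 : ℝ) * t ^ (5 / 3 : ℝ) * t ^ 2) := by
    rw [abs_div, abs_of_pos (pow_pos ht 2), Real.div_rpow (abs_nonneg _) (by positivity),
      ← Real.rpow_natCast, ← Real.rpow_mul ht.le, ← Real.rpow_add ht, ← Real.rpow_add ht]
    norm_num
  rw [hpow]
  simp only [kappaA, detDeriv, iteratedDeriv_one]
  rcases eq_or_ne (|det2 (deriv γ t) (iteratedDeriv 2 γ t)| ^ (8 / 3 : ℝ)) 0 with h | h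
  · -- both sides are junk values `x / 0 = 0`
    simp [h]
  · field_simp

theorem hasRightExpansion_numerator (hγ : ContDiff ℝ (⊤ : ℕ∞) γ)
    (h1 : deriv γ 0 = 0) :
    HasRightExpansion (fun t => (3 * detDeriv γ 1 2 t * detDeriv γ 1 4 t
        + 12 * detDeriv γ 1 2 t * detDeriv γ 2 3 t - 5 * detDeriv γ 1 3 t ^ 2) / t ^ 2)
      (detDeriv γ 2 3 0 ^ 2) (3 / 2 * detDeriv γ 2 3 0 * detDeriv γ 2 4 0) := by
  have h12 := hasRightExpansion_detDeriv_one_two hγ h1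
  have h13 := hasRightExpansion_detDeriv_one_three hγ h1
  have h := (((h12.mul (hasRightExpansion_detDeriv_one_four hγ h1)).const_mul 3).add
    ((h12.mul (hasRightExpansion_detDeriv_two_three hγ)).const_mul 12)).sub
    ((h13.mul h13).const_mul 5)
  convert h.congr fun t (ht : 0 < t) => ?_ using 1
  · ring
  · ring
  · field_simp

theorem hasRightExpansion_sA_div (hγ : ContDiff ℝ (⊤ : ℕ∞) γ)
    (h1 : deriv γ 0 = 0) (hμ : detDeriv γ 2 3 0 ≠ 0) :
    HasRightExpansion (fun t => sA γ t / t ^ (5 / 3 : ℝ))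
      (3 / 5 * |detDeriv γ 2 3 0 / 2| ^ (1 / 3 : ℝ))
      (|detDeriv γ 2 3 0 / 2| ^ (1 / 3 : ℝ) * detDeriv γ 2 4 0 / (12 * detDeriv γ 2 3 0)) := by
  have hroot := (hasRightExpansion_detDeriv_one_two hγ h1).comp
    (hasDerivAt_abs_rpow_of_ne_zero (div_ne_zero hμ two_ne_zero) (1 / 3))
  have hroot' := hroot.congr (g := fun t => |detDeriv γ 1 2 t| ^ (1 / 3 : ℝ) / t ^ (2 / 3 : ℝ))
    fun t (ht : 0 < t) => by
      dsimp only
      rw [abs_div, abs_of_pos (pow_pos ht 2), Real.div_rpow (abs_nonneg _) (by positivity),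
        ← Real.rpow_natCast, ← Real.rpow_mul ht.le]
      norm_num
  have := HasRightExpansion.div_rpow_add_one_of_hasDerivAt (by norm_num) (hasDerivAt_sA hγ)
    (by simp [sA]) hroot'
  convert this using 1
  · norm_num
  · ring
  · field_simp
    ring

theorem hasRightExpansion_sA_sq_mul_kappaA (hγ : ContDiff ℝ (⊤ : ℕ∞) γ)
    (hcusp : HasCusp γ) : HasRightExpansion (fun t => sA γ t ^ 2 * kappaA γ t) (4 / 25) 0 := by
  obtain ⟨h1, hμ⟩ := hcusp
  change detDeriv γ 2 3 0 ≠ 0 at hμ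
  have hS := hasRightExpansion_sA_div hγ h1 hμ
  have hW := ((hasRightExpansion_detDeriv_one_two hγ h1).comp
    (hasDerivAt_abs_rpow_of_ne_zero (div_ne_zero hμ two_ne_zero) (8 / 3))).const_mul 9
  have ha : 0 < |detDeriv γ 2 3 0 / 2| := abs_pos.2 (div_ne_zero hμ two_ne_zero)
  have h := ((hS.mul hS).mul (hasRightExpansion_numerator hγ h1)).div hW
    (mul_ne_zero (by norm_num) (Real.rpow_pos_of_pos ha _).ne')
  set μ := detDeriv γ 2 3 0
  set m := |μ / 2| ^ (1 / 3 : ℝ)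
  have hm8 : |μ / 2| ^ (8 / 3 : ℝ) = m ^ 8 := by
    rw [← Real.rpow_natCast, ← Real.rpow_mul ha.le]
    norm_num
  have hm : 0 < m := Real.rpow_pos_of_pos ha _
  have hm3 : m ^ 3 = |μ / 2| := by
    rw [← Real.rpow_natCast, ← Real.rpow_mul ha.le]
    norm_num
  have hμ2 : μ ^ 2 = 4 * m ^ 6 := by
    rw [show m ^ 6 = (m ^ 3) ^ 2 by ring, hm3, sq_abs]
    ring
  convert h.congr fun t ht => (sA_sq_mul_kappaA_eq ht).symm using 1
  · rw [hm8, hμ2]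
    field_simp
    norm_num
  · rw [hm8]
    field_simp
    ring

end Curve

theorem stmt_8_general (γ : ℝ → ℝ × ℝ) (hγ : ContDiff ℝ (⊤:ℕ∞) γ) (hcusp : HasCusp γ)
    (F : ℝ → ℝ) (ε : ℝ) (hε : 0 < ε)
    (hF : ContDiffOn ℝ (⊤:ℕ∞) F (Set.Ioo (-ε) ε))
    (hFeq : ∀ t ∈ Set.Ioo (-ε) ε, t ≠ 0 → F t = sA γ t ^ 2 * kappaA γ t) :
    F 0 = 4 / 25 ∧ deriv F 0 = 0 := by
  have hnhds : Ioo (-ε) ε ∈ 𝓝 (0 : ℝ) := Ioo_mem_nhds (neg_lt_zero.2 hε) hε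
  refine (hasRightExpansion_sA_sq_mul_kappaA hγ hcusp).eq_of_differentiableAt
    ((hF.differentiableOn (by simp)).differentiableAt hnhds) ?_
  filter_upwards [nhdsWithin_le_nhds hnhds, self_mem_nhdsWithin] with t ht ht0
  exact hFeq t ht (ne_of_gt ht0)

/-- At a 3/2-cusp, the `C^∞` extension `F` of `(s_A)²·κ_A` satisfies `F(0) = 4/25`
and `F'(0) = 0`. -/
theorem stmt_8 (γ : ℝ → ℝ × ℝ) (hγ : ContDiff ℝ (⊤:ℕ∞) γ) (hcusp : HasCusp γ)
    (hreg : ∀ᶠ t in 𝓝[≠] (0:ℝ), det2 (deriv γ t) (iteratedDeriv 2 γ t) ≠ 0)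
    (F : ℝ → ℝ) (ε : ℝ) (hε : 0 < ε)
    (hF : ContDiffOn ℝ (⊤:ℕ∞) F (Set.Ioo (-ε) ε))
    (hFeq : ∀ t ∈ Set.Ioo (-ε) ε, t ≠ 0 → F t = sA γ t ^ 2 * kappaA γ t) :
    F 0 = 4 / 25 ∧ deriv F 0 = 0 :=
  stmt_8_general γ hγ hcusp F ε hε hF hFeq
end
end

section
/- Let f : ℝ → ℝ be a C^∞ function with f(0) = 4/25 and f'(0) = 0. Then there exists a C^∞ curve γ : (−δ, δ) → ℝ² (for some δ > 0) with a 3/2-cusp at τ = 0 such that τ is the 3/5-arclength parameter of γ (i.e. s_A(τ) = sgn(τ)·|τ|^{5/3} for all τ, equivalently [γ'(τ), γ''(τ)] = 125τ²/27) and s_A(τ)²·κ_A(τ) = f(τ) for all τ ≠ 0 near 0. -/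
noncomputable section
open Real Set Filter Topology

/-!
Since `f 0 = 4/25` and `f' 0 = 0`, Hadamard's lemma applied twice writes `4 - 25 f τ = 9 τ² a τ`
with `a` smooth. Let `P` solve Hill's equation `P'' = a P` with Wronskian `[P, P'] ≡ 5/3`, and let
`γ' = (5/3) τ P`. Then `[γ', γ''] = (25/9) τ² [P, P'] = 125 τ²/27`, which integrates to
`s_A τ = sgn τ |τ|^{5/3}`; at `τ = 0` we get `γ' = 0` and `[γ'', γ'''] = (50/9) [P, P'] ≠ 0`; and
expanding the brackets in `κ_A` with `[P, P'] = 5/3` gives `s_A² κ_A = (4 - 9 τ² a) / 25 = f`.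
-/

open scoped ContDiff

theorem HasDerivAt.fst {E F : Type*} [NormedAddCommGroup E] [NormedSpace ℝ E]
    [NormedAddCommGroup F] [NormedSpace ℝ F] {f : ℝ → E × F} {v : E × F} {t : ℝ}
    (h : HasDerivAt f v t) : HasDerivAt (fun t => (f t).1) v.1 t := by
  simpa using h.hasFDerivAt.fst.hasDerivAt

theorem HasDerivAt.snd {E F : Type*} [NormedAddCommGroup E] [NormedSpace ℝ E]
    [NormedAddCommGroup F] [NormedSpace ℝ F] {f : ℝ → E × F} {v : E × F} {t : ℝ}
    (h : HasDerivAt f v t) : HasDerivAt (fun t => (f t).2) v.2 t := by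
  simpa using h.hasFDerivAt.snd.hasDerivAt

theorem iteratedDeriv_succ_eqOn {E : Type*} [NormedAddCommGroup E] [NormedSpace ℝ E]
    {f g g' : ℝ → E} {U : Set ℝ} (hU : IsOpen U) {n : ℕ} (hf : EqOn (iteratedDeriv n f) g U)
    (hg : ∀ t ∈ U, HasDerivAt g (g' t) t) : EqOn (iteratedDeriv (n + 1) f) g' U := fun t ht => by
  rw [iteratedDeriv_succ, (hf.eventuallyEq_of_mem (hU.mem_nhds ht)).deriv_eq, (hg t ht).deriv]

theorem hasDerivAt_integral_mul_comp_mul {w g : ℝ → ℝ} (hw : Continuous w)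
    (hg : ContDiff ℝ 1 g) (x₀ : ℝ) :
    HasDerivAt (fun x => ∫ t in (0:ℝ)..1, w t * g (t * x))
      (∫ t in (0:ℝ)..1, w t * t * deriv g (t * x₀)) x₀ := by
  have hgd : Differentiable ℝ g := hg.differentiable one_ne_zero
  have hg' : Continuous (deriv g) := hg.continuous_deriv le_rfl
  obtain ⟨C, hC⟩ := (isCompact_Icc (a := -(|x₀| + 1)) (b := |x₀| + 1)).exists_bound_of_continuousOn
      hg'.continuousOn
  have hF : ∀ x, Continuous fun t => w t * g (t * x) := fun x => by fun_prop
  refine (intervalIntegral.hasDerivAt_integral_of_dominated_loc_of_deriv_le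
    (F' := fun x t => w t * t * deriv g (t * x)) (bound := fun t => |w t| * C)
    (Metric.ball_mem_nhds x₀ one_pos)
    (.of_forall fun x => (hF x).aestronglyMeasurable) ((hF x₀).intervalIntegrable _ _)
    ((hw.mul continuous_id).mul
      (hg'.comp (continuous_id.mul continuous_const))).aestronglyMeasurable
    ?_ ((hw.abs.mul continuous_const).intervalIntegrable _ _) ?_).2
  · refine .of_forall fun t ht x hx => ?_
    rw [Set.uIoc_of_le zero_le_one] at ht
    have htx : t * x ∈ Icc (-(|x₀| + 1)) (|x₀| + 1) := by
      rw [Set.mem_Icc, ← abs_le, abs_mul, abs_of_pos ht.1]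
      have := abs_sub_abs_le_abs_sub x x₀
      rw [Metric.mem_ball, Real.dist_eq] at hx
      nlinarith [abs_nonneg x, ht.2]
    rw [norm_mul, norm_mul, Real.norm_eq_abs, Real.norm_eq_abs, abs_of_pos ht.1]
    calc |w t| * t * ‖deriv g (t * x)‖ ≤ |w t| * 1 * C := by gcongr; exacts [ht.2, hC _ htx]
      _ = |w t| * C := by ring
  · refine .of_forall fun t _ x _ => ?_
    have := ((hgd (t * x)).hasDerivAt.comp x ((hasDerivAt_id x).const_mul t)).const_mul (w t)
    exact this.congr_deriv (by ring)

theorem contDiff_integral_mul_comp_mul {w g : ℝ → ℝ} (hw : Continuous w)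
    (hg : ContDiff ℝ ∞ g) : ContDiff ℝ ∞ fun x => ∫ t in (0:ℝ)..1, w t * g (t * x) := by
  refine contDiff_infty.mpr fun n => ?_
  induction n generalizing w g with
  | zero =>
    exact contDiff_zero.mpr (continuous_iff_continuousAt.mpr fun x =>
      (hasDerivAt_integral_mul_comp_mul hw (hg.of_le (by simp)) x).continuousAt)
  | succ n ih =>
    have hJ := hasDerivAt_integral_mul_comp_mul hw (hg.of_le (by simp))
    push_cast
    refine contDiff_succ_iff_deriv.mpr ⟨fun x => (hJ x).differentiableAt, by simp, ?_⟩
    rw [funext fun x => (hJ x).deriv]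
    exact ih (by fun_prop) (contDiff_infty_iff_deriv.mp hg).2

theorem dslope_eq_integral {g : ℝ → ℝ} (hg : ContDiff ℝ 1 g) (a x : ℝ) :
    dslope g a x = ∫ t in (0:ℝ)..1, deriv g (a + t * (x - a)) := by
  rcases eq_or_ne x a with rfl | hx
  · simp [dslope_same]
  have hsub : x - a ≠ 0 := sub_ne_zero.mpr hx
  rw [dslope_of_ne _ hx, slope_def_field]
  simp_rw [add_comm a, mul_comm _ (x - a)]
  rw [intervalIntegral.integral_comp_mul_add _ hsub, mul_zero, mul_one, zero_add, sub_add_cancel,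
    intervalIntegral.integral_deriv_eq_sub
      (fun u _ => (hg.differentiable one_ne_zero).differentiableAt)
      ((hg.continuous_deriv le_rfl).intervalIntegrable _ _), smul_eq_mul]
  field_simp

theorem ContDiff.dslope {g : ℝ → ℝ} (hg : ContDiff ℝ ∞ g) (a : ℝ) :
    ContDiff ℝ ∞ (dslope g a) := by
  have hg' : ContDiff ℝ ∞ fun y => deriv g (a + y) :=
    (contDiff_infty_iff_deriv.mp hg).2.comp (contDiff_const.add contDiff_id)
  have := (contDiff_integral_mul_comp_mul (w := fun _ => 1) continuous_const hg').comp
    (contDiff_id.sub (contDiff_const (c := a)))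
  convert this using 1
  ext x
  simp [dslope_eq_integral (hg.of_le (by simp))]

theorem integral_abs_rpow_of_nonneg {r b : ℝ} (hr : -1 < r) (hb : 0 ≤ b) :
    ∫ x in (0:ℝ)..b, |x| ^ r = b ^ (r + 1) / (r + 1) := by
  rw [intervalIntegral.integral_congr (g := fun x => x ^ r) fun x hx => by
      rw [uIcc_of_le hb] at hx; simp only [abs_of_nonneg hx.1],
    integral_rpow (Or.inl hr), zero_rpow (by linarith), sub_zero]

theorem integral_abs_rpow {r : ℝ} (hr : -1 < r) (b : ℝ) :
    ∫ x in (0:ℝ)..b, |x| ^ r = Real.sign b * |b| ^ (r + 1) / (r + 1) := by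
  rcases lt_trichotomy b 0 with hb | rfl | hb
  · have hodd : ∫ x in (0:ℝ)..b, |x| ^ r = -∫ x in (0:ℝ)..-b, |x| ^ r := by
      rw [intervalIntegral.integral_symm (-b)]
      simpa [abs_neg] using intervalIntegral.integral_comp_neg (a := 0) (b := b) fun x => |x| ^ r
    rw [hodd, integral_abs_rpow_of_nonneg hr (by linarith), Real.sign_of_neg hb, abs_of_neg hb]
    ring
  · simp
  · rw [integral_abs_rpow_of_nonneg hr hb.le, Real.sign_of_pos hb, abs_of_pos hb, one_mul]

theorem abs_rpow_div_three (t : ℝ) (n : ℕ) [n.AtLeastTwo] :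
    |t| ^ ((ofNat(n) : ℝ) / 3) = (|t| ^ ((1 : ℝ) / 3)) ^ (ofNat(n) : ℕ) := by
  rw [← Real.rpow_ofNat, ← Real.rpow_mul (abs_nonneg t)]
  ring_nf

theorem sq_eq_abs_rpow_one_third_pow_six (t : ℝ) : t ^ 2 = (|t| ^ ((1 : ℝ) / 3)) ^ 6 := by
  rw [← abs_rpow_div_three, show (6:ℝ) / 3 = 2 by norm_num, Real.rpow_two, sq_abs]

theorem pow_three_rpow_div_three {y : ℝ} (hy : 0 ≤ y) (r : ℝ) : (y ^ 3) ^ (r / 3) = y ^ r := by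
  rw [← Real.rpow_natCast y 3, ← Real.rpow_mul hy]
  ring_nf

theorem exists_contDiffOn_forall_mem_Ioo_hasDerivAt {E : Type*} [NormedAddCommGroup E]
    [NormedSpace ℝ E] [CompleteSpace E] {v : ℝ → E → E}
    (hv : ContDiff ℝ ∞ (Function.uncurry v)) (x₀ : E) :
    ∃ ε > 0, ∃ α : ℝ → E, α 0 = x₀ ∧ ContDiffOn ℝ ∞ α (Ioo (-ε) ε) ∧
      ∀ t ∈ Ioo (-ε) ε, HasDerivAt α (v t (α t)) t := by
  -- make the equation autonomous by adjoining time as a coordinate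
  have hV : ContDiffAt ℝ 1 (fun p : ℝ × E => ((1 : ℝ), v p.1 p.2)) (0, x₀) :=
    (contDiff_const.prodMk hv).contDiffAt.of_le (by simp)
  obtain ⟨β, hβ0, ε, hε, hβ⟩ :=
    hV.exists_forall_mem_closedBall_exists_eq_forall_mem_Ioo_hasDerivAt₀ 0
  rw [zero_sub, zero_add] at hβ
  have htime : EqOn (fun t => (β t).1) id (Ioo (-ε) ε) :=
    isOpen_Ioo.eqOn_of_deriv_eq isPreconnected_Ioo
      (fun t ht => (hβ t ht).fst.differentiableAt.differentiableWithinAt)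
      differentiableOn_id (fun t ht => by simp [(hβ t ht).fst.deriv])
      (show (0:ℝ) ∈ Ioo (-ε) ε by simpa using hε) (by simp [hβ0])
  have hα : ∀ t ∈ Ioo (-ε) ε, HasDerivAt (fun t => (β t).2) (v t (β t).2) t := fun t ht => by
    simpa [htime ht] using (hβ t ht).snd
  have hsub : Icc (-(ε / 2)) (ε / 2) ⊆ Ioo (-ε) ε := Icc_subset_Ioo (by linarith) (by linarith)
  refine ⟨ε / 2, half_pos hε, fun t => (β t).2, by simp [hβ0], ?_,
    fun t ht => hα t (hsub (Ioo_subset_Icc_self ht))⟩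
  exact (ODE.contDiffOn_enat_Icc_of_hasDerivWithinAt (u := univ) hv.contDiffOn
    (fun t ht => (hα t (hsub ht)).hasDerivWithinAt) (mapsTo_univ _ _)).mono Ioo_subset_Icc_self

structure IsCuspFrame (ε : ℝ) (a : ℝ → ℝ) (γ P Q : ℝ → ℝ × ℝ) : Prop where
  pos : 0 < ε
  hasDerivAt_curve : ∀ t ∈ Ioo (-ε) ε, HasDerivAt γ (((5:ℝ) / 3 * t) • P t) t
  hasDerivAt_P : ∀ t ∈ Ioo (-ε) ε, HasDerivAt P (Q t) t
  hasDerivAt_Q : ∀ t ∈ Ioo (-ε) ε, HasDerivAt Q (a t • P t) t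
  det2_zero : det2 (P 0) (Q 0) = 5 / 3

namespace IsCuspFrame

variable {ε : ℝ} {a : ℝ → ℝ} {γ P Q : ℝ → ℝ × ℝ}

theorem zero_mem (hF : IsCuspFrame ε a γ P Q) : (0:ℝ) ∈ Ioo (-ε) ε := by
  simpa using hF.pos

theorem det2_eq (hF : IsCuspFrame ε a γ P Q) {t : ℝ} (ht : t ∈ Ioo (-ε) ε) :
    det2 (P t) (Q t) = 5 / 3 := by
  have hW : ∀ t ∈ Ioo (-ε) ε, HasDerivAt (fun t => det2 (P t) (Q t)) 0 t := fun t ht => by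
    have hP := hF.hasDerivAt_P t ht
    have hQ := hF.hasDerivAt_Q t ht
    refine ((hP.fst.mul hQ.snd).sub (hP.snd.mul hQ.fst)).congr_deriv ?_
    simp only [Prod.smul_fst, Prod.smul_snd, smul_eq_mul]
    ring
  rw [← hF.det2_zero]
  exact isOpen_Ioo.is_const_of_deriv_eq_zero isPreconnected_Ioo
    (fun t ht => (hW t ht).differentiableAt.differentiableWithinAt)
    (fun t ht => (hW t ht).deriv) ht hF.zero_mem

theorem deriv_eq (hF : IsCuspFrame ε a γ P Q) {t : ℝ} (ht : t ∈ Ioo (-ε) ε) :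
    deriv γ t = ((5:ℝ) / 3 * t) • P t :=
  (hF.hasDerivAt_curve t ht).deriv

theorem iteratedDeriv_two (hF : IsCuspFrame ε a γ P Q) :
    EqOn (iteratedDeriv 2 γ) (fun t => ((5:ℝ) / 3) • P t + ((5:ℝ) / 3 * t) • Q t) (Ioo (-ε) ε) :=
  iteratedDeriv_succ_eqOn isOpen_Ioo (n := 1) (fun t ht => by
      rw [iteratedDeriv_one, hF.deriv_eq ht]) fun t ht => by
    refine (((hasDerivAt_id t).const_mul ((5:ℝ) / 3)).smul (hF.hasDerivAt_P t ht)).congr_deriv ?_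
    ext <;> simp <;> ring

theorem iteratedDeriv_three (hF : IsCuspFrame ε a γ P Q) :
    EqOn (iteratedDeriv 3 γ)
      (fun t => ((10:ℝ) / 3) • Q t + ((5:ℝ) / 3 * t * a t) • P t) (Ioo (-ε) ε) :=
  iteratedDeriv_succ_eqOn isOpen_Ioo hF.iteratedDeriv_two fun t ht => by
    refine (((hF.hasDerivAt_P t ht).const_smul ((5:ℝ) / 3)).add
      (((hasDerivAt_id t).const_mul ((5:ℝ) / 3)).smul (hF.hasDerivAt_Q t ht))).congr_deriv ?_
    ext <;> simp <;> ring

theorem iteratedDeriv_four (hF : IsCuspFrame ε a γ P Q) (ha : Differentiable ℝ a) :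
    EqOn (iteratedDeriv 4 γ)
      (fun t => ((5:ℝ) / 3 * (3 * a t + t * deriv a t)) • P t + ((5:ℝ) / 3 * t * a t) • Q t)
      (Ioo (-ε) ε) :=
  iteratedDeriv_succ_eqOn isOpen_Ioo hF.iteratedDeriv_three fun t ht => by
    refine (((hF.hasDerivAt_Q t ht).const_smul ((10:ℝ) / 3)).add
      ((((hasDerivAt_id t).const_mul ((5:ℝ) / 3)).mul (ha t).hasDerivAt).smul
        (hF.hasDerivAt_P t ht))).congr_deriv ?_
    ext <;> simp <;> ring

theorem det2_deriv_iteratedDeriv_two (hF : IsCuspFrame ε a γ P Q) {t : ℝ}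
    (ht : t ∈ Ioo (-ε) ε) : det2 (deriv γ t) (iteratedDeriv 2 γ t) = 125 * t ^ 2 / 27 := by
  have hW := hF.det2_eq ht
  rw [hF.deriv_eq ht, hF.iteratedDeriv_two ht]
  simp only [det2, Prod.smul_fst, Prod.smul_snd, Prod.fst_add, Prod.snd_add, smul_eq_mul] at hW ⊢
  linear_combination 25 / 9 * t ^ 2 * hW

theorem hasCusp (hF : IsCuspFrame ε a γ P Q) : HasCusp γ := by
  have hW := hF.det2_eq hF.zero_mem
  have h23 : det2 (iteratedDeriv 2 γ 0) (iteratedDeriv 3 γ 0) = 250 / 27 := by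
    rw [hF.iteratedDeriv_two hF.zero_mem, hF.iteratedDeriv_three hF.zero_mem]
    simp only [det2, Prod.smul_fst, Prod.smul_snd, Prod.fst_add, Prod.snd_add, smul_eq_mul] at hW ⊢
    linear_combination 50 / 9 * hW
  exact ⟨by simp [hF.deriv_eq hF.zero_mem], by norm_num [h23]⟩

theorem sA_eq (hF : IsCuspFrame ε a γ P Q) {τ : ℝ} (hτ : τ ∈ Ioo (-ε) ε) :
    sA γ τ = Real.sign τ * |τ| ^ ((5:ℝ) / 3) := by
  have hsub : uIcc 0 τ ⊆ Ioo (-ε) ε := ordConnected_Ioo.uIcc_subset hF.zero_mem hτ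
  have hint : EqOn (fun u => |det2 (deriv γ u) (iteratedDeriv 2 γ u)| ^ ((1:ℝ) / 3))
      (fun u => (5 / 3) * |u| ^ ((2:ℝ) / 3)) (uIcc 0 τ) := fun u hu => by
    have hcube : 125 * u ^ 2 / 27 = ((5 / 3) * (|u| ^ ((1:ℝ) / 3)) ^ 2) ^ 3 := by
      rw [sq_eq_abs_rpow_one_third_pow_six u]
      ring
    simp only
    rw [hF.det2_deriv_iteratedDeriv_two (hsub hu), hcube, abs_of_nonneg (by positivity),
      pow_three_rpow_div_three (by positivity), Real.rpow_one, abs_rpow_div_three]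
  rw [sA, intervalIntegral.integral_congr hint, intervalIntegral.integral_const_mul,
    integral_abs_rpow (by norm_num)]
  ring_nf

theorem sA_sq_mul_kappaA (hF : IsCuspFrame ε a γ P Q) (ha : Differentiable ℝ a) {t : ℝ}
    (ht : t ∈ Ioo (-ε) ε) (ht0 : t ≠ 0) :
    sA γ t ^ 2 * kappaA γ t = (4 - 9 * t ^ 2 * a t) / 25 := by
  have hnum : 3 * det2 (deriv γ t) (iteratedDeriv 2 γ t) * det2 (deriv γ t) (iteratedDeriv 4 γ t)
      + 12 * det2 (deriv γ t) (iteratedDeriv 2 γ t)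
        * det2 (iteratedDeriv 2 γ t) (iteratedDeriv 3 γ t)
      - 5 * det2 (deriv γ t) (iteratedDeriv 3 γ t) ^ 2
      = (125 / 27) ^ 2 * t ^ 2 * (4 - 9 * t ^ 2 * a t) := by
    have hW := hF.det2_eq ht
    rw [hF.deriv_eq ht, hF.iteratedDeriv_two ht, hF.iteratedDeriv_three ht,
      hF.iteratedDeriv_four ha ht]
    simp only [det2, Prod.smul_fst, Prod.smul_snd, Prod.fst_add, Prod.snd_add, smul_eq_mul] at hW ⊢
    linear_combination (25 / 9) ^ 2 * t ^ 2 * (4 - 9 * t ^ 2 * a t)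
      * ((P t).1 * (Q t).2 - (P t).2 * (Q t).1 + 5 / 3) * hW
  -- everything is a power of the cube root `s` of `|t|`
  set s := |t| ^ ((1:ℝ) / 3)
  have hs0 : 0 < s := by positivity
  have ht2 : t ^ 2 = s ^ 6 := sq_eq_abs_rpow_one_third_pow_six t
  have hsA : sA γ t ^ 2 = s ^ 10 := by
    have hsign : Real.sign t ^ 2 = 1 := by
      rcases Real.sign_apply_eq_of_ne_zero t ht0 with h | h <;> simp [h]
    rw [hF.sA_eq ht, abs_rpow_div_three, mul_pow, hsign, one_mul, ← pow_mul]
  have hden : |det2 (deriv γ t) (iteratedDeriv 2 γ t)| ^ ((8:ℝ) / 3) = (5 / 3 * s ^ 2) ^ 8 := by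
    rw [hF.det2_deriv_iteratedDeriv_two ht, ht2,
      show 125 * s ^ 6 / 27 = (5 / 3 * s ^ 2) ^ 3 by ring, abs_of_nonneg (by positivity),
      pow_three_rpow_div_three (by positivity), Real.rpow_ofNat]
  rw [hsA, kappaA, hnum, hden, ht2]
  field_simp
  ring

end IsCuspFrame

theorem exists_isCuspFrame {a : ℝ → ℝ} (ha : ContDiff ℝ ∞ a) :
    ∃ ε : ℝ, ∃ γ P Q : ℝ → ℝ × ℝ, IsCuspFrame ε a γ P Q ∧ ContDiffOn ℝ ∞ γ (Ioo (-ε) ε) := by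
  let v : ℝ → (ℝ × ℝ) × (ℝ × ℝ) × (ℝ × ℝ) → (ℝ × ℝ) × (ℝ × ℝ) × (ℝ × ℝ) :=
    fun t x => (((5:ℝ) / 3 * t) • x.2.1, x.2.2, a t • x.2.1)
  have hv : ContDiff ℝ ∞ (Function.uncurry v) := by
    simp only [v, Function.uncurry_def]
    fun_prop
  obtain ⟨ε, hε, α, hα0, hα_smooth, hα⟩ :=
    exists_contDiffOn_forall_mem_Ioo_hasDerivAt hv (0, (1, 0), (0, 5 / 3))
  refine ⟨ε, fun t => (α t).1, fun t => (α t).2.1, fun t => (α t).2.2,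
    ⟨hε, fun t ht => (hα t ht).fst, fun t ht => (hα t ht).snd.fst, fun t ht => (hα t ht).snd.snd,
      by simp [hα0, det2]⟩, contDiff_fst.comp_contDiffOn hα_smooth⟩

/-- Realization: for any smooth `f` with `f(0) = 4/25` and `f'(0) = 0`, there is a
3/2-cusp, parametrized by its 3/5-arclength parameter, whose normalized affine
curvature function is `f`. -/
theorem stmt_10 (f : ℝ → ℝ) (hf : ContDiff ℝ (⊤:ℕ∞) f)
    (hf0 : f 0 = 4/25) (hf'0 : deriv f 0 = 0) :
    ∃ δ > (0:ℝ), ∃ γ : ℝ → ℝ × ℝ,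
      ContDiffOn ℝ (⊤:ℕ∞) γ (Set.Ioo (-δ) δ) ∧ HasCusp γ ∧
      (∀ τ ∈ Set.Ioo (-δ) δ, sA γ τ = Real.sign τ * |τ| ^ ((5:ℝ)/3)) ∧
      (∀ τ ∈ Set.Ioo (-δ) δ, det2 (deriv γ τ) (iteratedDeriv 2 γ τ) = 125 * τ ^ 2 / 27) ∧
      (∀ τ ∈ Set.Ioo (-δ) δ, τ ≠ 0 → sA γ τ ^ 2 * kappaA γ τ = f τ) := by
  set k : ℝ → ℝ := fun τ => (4 - 25 * f τ) / 9 with hk_def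
  have hk : ContDiff ℝ ∞ k := by fun_prop
  have hk0 : k 0 = 0 := by norm_num [k, hf0]
  have hk'0 : deriv k 0 = 0 := by
    have : HasDerivAt k (-(25 * deriv f 0) / 9) 0 :=
      ((((hf.differentiable (by simp)) 0).hasDerivAt.const_mul 25).const_sub 4).div_const 9
    rw [this.deriv, hf'0]
    ring
  set a := dslope (dslope k 0) 0
  have ha : ContDiff ℝ ∞ a := (hk.dslope 0).dslope 0
  have hka : ∀ τ, τ ^ 2 * a τ = k τ := fun τ => by
    simpa using pow_sub_smul_iterate_dslope_of_zero 2 (f := k) (a := 0)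
      (by intro i hi; interval_cases i <;> simpa) τ
  obtain ⟨ε, γ, P, Q, hF, hγ⟩ := exists_isCuspFrame ha
  refine ⟨ε, hF.pos, γ, hγ, hF.hasCusp, fun τ hτ => hF.sA_eq hτ,
    fun τ hτ => hF.det2_deriv_iteratedDeriv_two hτ, fun τ hτ hτ0 => ?_⟩
  rw [hF.sA_sq_mul_kappaA (ha.differentiable (by simp)) hτ hτ0, mul_assoc, hka, hk_def]
  ring
end
end
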